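/- arXiv:2410.03166 — 7 statements merged into one kernel-verified Lean document; each statement's English description precedes it below -/
import Mathlib

section
/- Let z ∈ ℂ with Re(z) > 2/a for some a > 0. Then for every real number u, |2iz/(z² + u²)| < a. -/
/-- Let `z ∈ ℂ` with `Re z > 2/a` for some `a > 0`.  Then for every real `u`,
`|2 i z / (z² + u²)| < a`. -/
theorem stmt3 (a : ℝ) (ha : 0 < a) (z : ℂ) (hz : 2 / a < z.re) (u : ℝ) :
    ‖2 * Complex.I * z / (z ^ 2 + (u : ℂ) ^ 2)‖ < a := by
  have hr : 0 < z.re := lt_trans (by positivity) hz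
  have h1 : z + (u : ℂ) * Complex.I ≠ 0 := by
    intro h
    have := congrArg Complex.re h
    simp at this
    linarith
  have h2 : z - (u : ℂ) * Complex.I ≠ 0 := by
    intro h
    have := congrArg Complex.re h
    simp at this
    linarith
  have hfac : z ^ 2 + (u : ℂ) ^ 2 = (z + (u : ℂ) * Complex.I) * (z - (u : ℂ) * Complex.I) := by
    linear_combination ((u : ℂ) ^ 2) * Complex.I_sq
  have hsplit : 2 * Complex.I * z / (z ^ 2 + (u : ℂ) ^ 2) =
      Complex.I / (z + (u : ℂ) * Complex.I) + Complex.I / (z - (u : ℂ) * Complex.I) := by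
    rw [hfac, div_add_div _ _ h1 h2]
    congr 1
    ring
  have hb1 : ‖Complex.I / (z + (u : ℂ) * Complex.I)‖ ≤ 1 / z.re := by
    rw [norm_div, Complex.norm_I]
    apply div_le_div_of_nonneg_left one_pos.le hr
    calc z.re = (z + (u : ℂ) * Complex.I).re := by simp
      _ ≤ ‖z + (u : ℂ) * Complex.I‖ := Complex.re_le_norm _
  have hb2 : ‖Complex.I / (z - (u : ℂ) * Complex.I)‖ ≤ 1 / z.re := by
    rw [norm_div, Complex.norm_I]
    apply div_le_div_of_nonneg_left one_pos.le hr
    calc z.re = (z - (u : ℂ) * Complex.I).re := by simp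
      _ ≤ ‖z - (u : ℂ) * Complex.I‖ := Complex.re_le_norm _
  have htri := norm_add_le (Complex.I / (z + (u : ℂ) * Complex.I))
    (Complex.I / (z - (u : ℂ) * Complex.I))
  have hlt : 2 / z.re < a := by
    rw [div_lt_iff₀ hr]
    rw [div_lt_iff₀ ha] at hz
    nlinarith
  calc ‖2 * Complex.I * z / (z ^ 2 + (u : ℂ) ^ 2)‖
      ≤ 1 / z.re + 1 / z.re := by rw [hsplit]; exact htri.trans (add_le_add hb1 hb2)
    _ = 2 / z.re := by ring
    _ < a := hlt
end

section
/- Let D < 0 and let Z be any rational symmetric 2×2 matrix with det Z = −D/4. Write Z = c·T_θ + W with c ∈ ℚ and W in the orthogonal complement of T_θ with respect to ⟨X,Y⟩ = tr(XY†). Then |c| ≥ 1, with equality if and only if Z = ±T_θ. -/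
/-- Let `D < 0` and let `Z` be a rational symmetric 2×2 matrix with `det Z = -D/4`.
Write `Z = c • T_θ + W` with `W` orthogonal to `T_θ` for the form
`⟨X, Y⟩ = tr(X Y†)`.  Then `|c| ≥ 1`, with equality iff `Z = ±T_θ`. -/
theorem stmt9 (D : ℤ) (hD : D < 0) (t : ℤ) (ht : t = 0 ∨ t = 1)
    (N : ℚ) (hN : N = ((t : ℚ) ^ 2 - (D : ℚ)) / 4)
    (Tθ : Matrix (Fin 2) (Fin 2) ℚ) (hT : Tθ = !![1, (t : ℚ) / 2; (t : ℚ) / 2, N])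
    (Z W : Matrix (Fin 2) (Fin 2) ℚ) (hZs : Z.IsSymm) (hWs : W.IsSymm)
    (hdet : Z.det = -(D : ℚ) / 4) (c : ℚ)
    (horth : Matrix.trace (Tθ * W.adjugate) = 0)
    (hdec : Z = c • Tθ + W) :
    1 ≤ |c| ∧ (|c| = 1 ↔ Z = Tθ ∨ Z = -Tθ) := by
  subst hT hN
  have hDq : (D:ℚ) < 0 := by exact_mod_cast hD
  have hb : W 1 0 = W 0 1 := hWs.apply 0 1
  have h1 : W 1 1 - (t:ℚ) * W 0 1 + ((t:ℚ)^2 - (D:ℚ))/4 * W 0 0 = 0 := by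
    simp [Matrix.trace_fin_two, Matrix.mul_apply, Matrix.adjugate_fin_two,
      Fin.sum_univ_two, hb] at horth
    linear_combination horth
  have h2 : (c + W 0 0) * (c * (((t:ℚ)^2 - (D:ℚ))/4) + W 1 1)
      - (c * ((t:ℚ)/2) + W 0 1)^2 = -(D:ℚ)/4 := by
    rw [hdec] at hdet
    simp [Matrix.det_fin_two, Matrix.add_apply, Matrix.smul_apply, hb, smul_eq_mul] at hdet
    linear_combination hdet
  have key : (c^2 - 1) * (-(D:ℚ)/4)
      = (W 0 1 - (t:ℚ)/2 * W 0 0)^2 + (-(D:ℚ)/4) * (W 0 0)^2 := by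
    linear_combination h2 - c * h1 - W 0 0 * h1
  have hc2 : 1 ≤ c^2 := by
    nlinarith [sq_nonneg (W 0 1 - (t:ℚ)/2 * W 0 0), sq_nonneg (W 0 0)]
  have habs : 1 ≤ |c| := by
    nlinarith [sq_abs c, abs_nonneg c]
  refine ⟨habs, ?_, ?_⟩
  · intro h
    have hc2' : c^2 = 1 := by
      have := sq_abs c; rw [h] at this; linarith [this]
    have hs : (W 0 1 - (t:ℚ)/2 * W 0 0)^2 + (-(D:ℚ)/4) * (W 0 0)^2 = 0 := by
      linear_combination (-(D:ℚ)/4) * hc2' - key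
    have hpos : (0:ℚ) < -(D:ℚ)/4 := by linarith
    have hW00 : W 0 0 = 0 := by
      have hB : (W 0 0)^2 = 0 := by
        by_contra hne
        have h0 : 0 < (W 0 0)^2 := lt_of_le_of_ne (sq_nonneg _) (Ne.symm hne)
        nlinarith [sq_nonneg (W 0 1 - (t:ℚ)/2 * W 0 0), mul_pos hpos h0]
      exact sq_eq_zero_iff.mp hB
    have hW01 : W 0 1 = 0 := by
      have hB : (W 0 1)^2 = 0 := by
        rw [hW00] at hs; linear_combination hs
      exact sq_eq_zero_iff.mp hB
    have hW11 : W 1 1 = 0 := by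
      rw [hW00, hW01] at h1; linarith
    have hW : W = 0 := by
      ext i j; fin_cases i <;> fin_cases j
      · exact hW00
      · exact hW01
      · exact hb.trans hW01
      · exact hW11
    rcases (abs_eq (by norm_num : (0:ℚ) ≤ 1)).mp h with h' | h'
    · left; rw [hdec, hW, h', one_smul, add_zero]
    · right; rw [hdec, hW, h', add_zero, neg_smul, one_smul]
  · rintro (hZ | hZ)
    · have e := hdec.symm.trans hZ
      have e00 := congrFun (congrFun e 0) 0
      have e01 := congrFun (congrFun e 0) 1
      have e11 := congrFun (congrFun e 1) 1
      simp [Matrix.add_apply, Matrix.smul_apply, smul_eq_mul] at e00 e01 e11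
      have w00 : W 0 0 = 1 - c := by linear_combination e00
      have w01 : W 0 1 = (1 - c) * ((t:ℚ)/2) := by linear_combination e01
      have w11 : W 1 1 = (1 - c) * (((t:ℚ)^2 - (D:ℚ))/4) := by linear_combination e11
      rw [w00, w01, w11] at h1
      have h' : (1 - c) * (-(D:ℚ)) = 0 := by linear_combination 2 * h1
      rcases mul_eq_zero.mp h' with h'' | h''
      · have : c = 1 := by linarith
        rw [this]; norm_num
      · exfalso; linarith
    · have e := hdec.symm.trans hZ
      have e00 := congrFun (congrFun e 0) 0
      have e01 := congrFun (congrFun e 0) 1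
      have e11 := congrFun (congrFun e 1) 1
      simp [Matrix.add_apply, Matrix.smul_apply, smul_eq_mul, Matrix.neg_apply] at e00 e01 e11
      have w00 : W 0 0 = -1 - c := by linear_combination e00
      have w01 : W 0 1 = (-1 - c) * ((t:ℚ)/2) := by linear_combination e01
      have w11 : W 1 1 = (-1 - c) * (((t:ℚ)^2 - (D:ℚ))/4) := by linear_combination e11
      rw [w00, w01, w11] at h1
      have h' : (-1 - c) * (-(D:ℚ)) = 0 := by linear_combination 2 * h1
      rcases mul_eq_zero.mp h' with h'' | h''
      · have : c = -1 := by linarith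
        rw [this]; norm_num
      · exfalso; linarith
end

section
/- Let Z be a real symmetric 2×2 matrix with det Z > 0 and let a ≥ 0. Equip V(ℝ) with the norm ‖X‖ := (x² − ⟨X_Z, X_Z⟩)^{1/2} for X = xZ + X_Z with x ∈ ℝ and X_Z ⊥ Z. Then for every such X: |⟨X + iZ, X + iZ⟩ − a|² ≥ (2 det Z)² (x² + 1) · (1 + (‖X_Z‖² + a)/(2 (det Z)(x² + 1)))². -/
/-- Let `Z` be a real symmetric 2×2 matrix with `det Z > 0`, `a ≥ 0`, and
`X = x • Z + X_Z` with `X_Z ⊥ Z` for the form `⟨X, Y⟩ := tr(X Y†)` (extended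
ℂ-bilinearly).  With `‖X_Z‖² = -⟨X_Z, X_Z⟩`, one has
`|⟨X + iZ, X + iZ⟩ - a|² ≥ (2 det Z)² (x²+1) (1 + (‖X_Z‖² + a)/(2 det Z (x²+1)))²`. -/
theorem stmt10 (Z : Matrix (Fin 2) (Fin 2) ℝ) (hZs : Z.IsSymm) (hZ : 0 < Z.det)
    (a : ℝ) (ha : 0 ≤ a) (x : ℝ) (XZ : Matrix (Fin 2) (Fin 2) ℝ) (hXZs : XZ.IsSymm)
    (horth : Matrix.trace (Z * XZ.adjugate) = 0) :
    (2 * Z.det) ^ 2 * (x ^ 2 + 1) *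
        (1 + (-Matrix.trace (XZ * XZ.adjugate) + a) / (2 * Z.det * (x ^ 2 + 1))) ^ 2 ≤
      ‖Matrix.trace
          (((x • Z + XZ).map (fun r : ℝ => (r : ℂ)) +
              Complex.I • Z.map (fun r : ℝ => (r : ℂ))) *
            ((x • Z + XZ).map (fun r : ℝ => (r : ℂ)) +
              Complex.I • Z.map (fun r : ℝ => (r : ℂ))).adjugate) - (a : ℂ)‖ ^ 2 := by
  set M : Matrix (Fin 2) (Fin 2) ℂ :=
    (x • Z + XZ).map (fun r : ℝ => (r : ℂ)) + Complex.I • Z.map (fun r : ℝ => (r : ℂ)) with hM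
  have hz : Z 1 0 = Z 0 1 := hZs.apply 0 1
  have hw : XZ 1 0 = XZ 0 1 := hXZs.apply 0 1
  -- trace(M * adj M) = 2 * det M
  have htr : Matrix.trace (M * M.adjugate) = 2 * M.det := by
    rw [Matrix.mul_adjugate, Matrix.trace_smul, Matrix.trace_one]
    simp [smul_eq_mul]
    ring
  have hdetZ : Z.det = Z 0 0 * Z 1 1 - Z 0 1 * Z 0 1 := by rw [Matrix.det_fin_two, hz]
  have horth' : Z 0 0 * XZ 1 1 - 2 * Z 0 1 * XZ 0 1 + Z 1 1 * XZ 0 0 = 0 := by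
    have h := horth
    rw [Matrix.trace_fin_two] at h
    simp only [Matrix.mul_apply, Matrix.adjugate_fin_two, Fin.sum_univ_two,
      Matrix.of_apply, Matrix.cons_val', Matrix.cons_val_zero, Matrix.cons_val_one,
      Matrix.head_cons, Matrix.empty_val', Matrix.cons_val_fin_one, Matrix.head_fin_const] at h
    rw [hz, hw] at h
    linarith
  have hq : Matrix.trace (XZ * XZ.adjugate) = 2 * (XZ 0 0 * XZ 1 1 - XZ 0 1 * XZ 0 1) := by
    rw [Matrix.trace_fin_two]
    simp only [Matrix.mul_apply, Matrix.adjugate_fin_two, Fin.sum_univ_two,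
      Matrix.of_apply, Matrix.cons_val', Matrix.cons_val_zero, Matrix.cons_val_one,
      Matrix.head_cons, Matrix.empty_val', Matrix.cons_val_fin_one, Matrix.head_fin_const]
    rw [hw]
    ring
  have hMij : ∀ i j, M i j = ((x * Z i j + XZ i j : ℝ) : ℂ) + Complex.I * (Z i j : ℂ) := by
    intro i j
    simp [hM, Matrix.map_apply, Matrix.add_apply, Matrix.smul_apply, smul_eq_mul]
  have hI : Complex.I * Complex.I = -1 := Complex.I_mul_I
  have h2 : (Z 0 0 : ℂ) * XZ 1 1 - 2 * Z 0 1 * XZ 0 1 + Z 1 1 * XZ 0 0 = 0 := by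
    exact_mod_cast congrArg (fun r : ℝ => (r : ℂ)) horth'
  have hdZ : (Z.det : ℂ) = (Z 0 0 : ℂ) * Z 1 1 - (Z 0 1 : ℂ) * Z 0 1 := by
    exact_mod_cast congrArg (fun r : ℝ => (r : ℂ)) hdetZ
  have hdetM : M.det =
      ((x ^ 2 * Z.det + (XZ 0 0 * XZ 1 1 - XZ 0 1 * XZ 0 1) - Z.det : ℝ) : ℂ) +
        ((2 * x * Z.det : ℝ) : ℂ) * Complex.I := by
    rw [Matrix.det_fin_two, hMij, hMij, hMij, hMij, hz, hw]
    push_cast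
    linear_combination ((x : ℂ) + Complex.I) * h2 +
      ((Z 0 0 : ℂ) * Z 1 1 - (Z 0 1 : ℂ) * Z 0 1) * hI +
      (-((x : ℂ) ^ 2 - 1 + 2 * x * Complex.I)) * hdZ
  have habs : Matrix.trace (M * M.adjugate) - (a : ℂ) =
      ((2 * (x ^ 2 * Z.det + (XZ 0 0 * XZ 1 1 - XZ 0 1 * XZ 0 1) - Z.det) - a : ℝ) : ℂ) +
        ((4 * x * Z.det : ℝ) : ℂ) * Complex.I := by
    rw [htr, hdetM]
    push_cast
    ring
  rw [habs, hq, Complex.sq_norm, Complex.normSq_add_mul_I]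
  have hx1 : (0 : ℝ) < x ^ 2 + 1 := by positivity
  set d := Z.det with hd
  set dw := XZ 0 0 * XZ 1 1 - XZ 0 1 * XZ 0 1 with hdw
  set s := -(2 * dw) + a with hs
  have hL : (2 * d) ^ 2 * (x ^ 2 + 1) * (1 + s / (2 * d * (x ^ 2 + 1))) ^ 2 =
      (2 * d * (x ^ 2 + 1) + s) ^ 2 / (x ^ 2 + 1) := by
    have h2d : 2 * d * (x ^ 2 + 1) ≠ 0 := by positivity
    field_simp
  rw [hL, div_le_iff₀ hx1]
  have key : ((2 * (x ^ 2 * d + dw - d) - a) ^ 2 + (4 * x * d) ^ 2) * (x ^ 2 + 1) -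
      (2 * d * (x ^ 2 + 1) + s) ^ 2 = (x * (2 * d * (x ^ 2 + 1) - s)) ^ 2 := by
    rw [hs]
    ring
  nlinarith [sq_nonneg (x * (2 * d * (x ^ 2 + 1) - s)), key]
end

section
/- Let Z, Z' be real symmetric 2×2 matrices with det Z > 0 and det Z' > 0. Then ⟨Z, Z'⟩ ≠ 0, and for every real symmetric X: |⟨X + iZ, Z'⟩| ≥ |⟨Z, Z'⟩|. Moreover, with ε₃ := [[0,0],[0,1]], one has ⟨Z, ε₃⟩ ≠ 0 and |⟨X + iZ, ε₃⟩| ≥ |⟨Z, ε₃⟩|. -/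
open Matrix Complex

lemma aux_trace (A B C : Matrix (Fin 2) (Fin 2) ℝ) :
    Matrix.trace ((A.map (fun r => (r:ℂ)) + Complex.I • B.map (fun r => (r:ℂ))) *
      (C.map (fun r => (r:ℂ))).adjugate) =
    ((Matrix.trace (A * C.adjugate) : ℝ) : ℂ) + Complex.I * ((Matrix.trace (B * C.adjugate) : ℝ) : ℂ) := by
  simp [Matrix.trace, Matrix.diag, Matrix.mul_apply, Fin.sum_univ_two,
    Matrix.adjugate_fin_two, Matrix.map_apply, Matrix.add_apply, Matrix.smul_apply]
  ring

lemma aux_abs (r s : ℝ) : |s| ≤ ‖(r : ℂ) + Complex.I * (s : ℂ)‖ := by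
  have h : ((r : ℂ) + Complex.I * (s : ℂ)).im = s := by simp
  calc |s| = |((r : ℂ) + Complex.I * (s : ℂ)).im| := by rw [h]
    _ ≤ _ := Complex.abs_im_le_norm _

/-- Let `Z, Z'` be real symmetric 2×2 matrices with positive determinant, for the
form `⟨X, Y⟩ := tr(X Y†)` (extended ℂ-bilinearly).  Then `⟨Z, Z'⟩ ≠ 0` and
`|⟨X + iZ, Z'⟩| ≥ |⟨Z, Z'⟩|` for all real symmetric `X`; likewise with
`ε₃ = !![0,0;0,1]` in place of `Z'`. -/
theorem stmt11 (Z Z' : Matrix (Fin 2) (Fin 2) ℝ) (hZs : Z.IsSymm) (hZ's : Z'.IsSymm)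
    (hZ : 0 < Z.det) (hZ' : 0 < Z'.det) :
    let ε₃ : Matrix (Fin 2) (Fin 2) ℝ := !![0, 0; 0, 1]
    let c : ℝ → ℂ := fun r => (r : ℂ)
    Matrix.trace (Z * Z'.adjugate) ≠ 0 ∧
    Matrix.trace (Z * ε₃.adjugate) ≠ 0 ∧
    ∀ X : Matrix (Fin 2) (Fin 2) ℝ, X.IsSymm →
      |Matrix.trace (Z * Z'.adjugate)| ≤
        ‖Matrix.trace ((X.map c + Complex.I • Z.map c) * (Z'.map c).adjugate)‖ ∧
      |Matrix.trace (Z * ε₃.adjugate)| ≤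
        ‖Matrix.trace ((X.map c + Complex.I • Z.map c) * (ε₃.map c).adjugate)‖ := by
  intro ε₃ c
  have hb : Z 1 0 = Z 0 1 := hZs.apply 0 1
  have hb' : Z' 1 0 = Z' 0 1 := hZ's.apply 0 1
  rw [Matrix.det_fin_two] at hZ hZ'
  rw [hb] at hZ; rw [hb'] at hZ'
  have htr : Matrix.trace (Z * Z'.adjugate) =
      Z 0 0 * Z' 1 1 + Z 1 1 * Z' 0 0 - 2 * (Z 0 1 * Z' 0 1) := by
    simp [Matrix.trace, Matrix.diag, Matrix.mul_apply, Fin.sum_univ_two,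
      Matrix.adjugate_fin_two, hb, hb']
    ring
  have htr3 : Matrix.trace (Z * ε₃.adjugate) = Z 0 0 := by
    simp [Matrix.trace, Matrix.diag, Matrix.mul_apply, Fin.sum_univ_two,
      Matrix.adjugate_fin_two, ε₃]
  have had : 0 < Z 0 0 * Z 1 1 := by nlinarith [sq_nonneg (Z 0 1)]
  have had' : 0 < Z' 0 0 * Z' 1 1 := by nlinarith [sq_nonneg (Z' 0 1)]
  have ha : Z 0 0 ≠ 0 := left_ne_zero_of_mul had.ne'
  have ha' : Z' 0 0 ≠ 0 := left_ne_zero_of_mul had'.ne'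
  have h1 : Matrix.trace (Z * Z'.adjugate) ≠ 0 := by
    rw [htr]
    intro h
    have e : (0:ℝ) = (Z 0 0)^2 * (Z' 0 0 * Z' 1 1 - Z' 0 1 * Z' 0 1)
        + (Z' 0 0)^2 * (Z 0 0 * Z 1 1 - Z 0 1 * Z 0 1)
        + (Z 0 0 * Z' 0 1 - Z' 0 0 * Z 0 1)^2 := by
      linear_combination (-(Z 0 0 * Z' 0 0)) * h
    nlinarith [mul_pos (pow_pos (abs_pos.mpr ha) 2) hZ', mul_pos (pow_pos (abs_pos.mpr ha') 2) hZ,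
      sq_nonneg (Z 0 0 * Z' 0 1 - Z' 0 0 * Z 0 1), _root_.sq_abs (Z 0 0), _root_.sq_abs (Z' 0 0)]
  have h3 : Matrix.trace (Z * ε₃.adjugate) ≠ 0 := by rw [htr3]; exact ha
  refine ⟨h1, h3, fun X hXs => ⟨?_, ?_⟩⟩
  · rw [aux_trace X Z Z']
    exact aux_abs _ _
  · rw [show (ε₃.map c) = ((!![0, 0; 0, 1] : Matrix (Fin 2) (Fin 2) ℝ).map c) from rfl,
      aux_trace X Z]
    exact aux_abs _ _
end

section
/- For every compact interval I ⊂ (1, l₀ − 2) (with l₀ ∈ ℕ) and every T > 1, there exists a constant C > 0 such that for all s ∈ ℂ with Re(s) ∈ I and all integers l ≥ l₀: 1/|Γ(l − s − 1)| ≤ C · ( l^{Re(s)} / Γ(l − 1) + T^{−l} / |Γ(−s − 1)| ). -/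
open Finset

lemma cGamma_shift (z : ℂ) (n : ℕ) (h : ∀ k : ℕ, k < n → z + k ≠ 0) :
    Complex.Gamma (z + n) = Complex.Gamma z * ∏ k ∈ Finset.range n, (z + k) := by
  induction n with
  | zero => simp
  | succ n ih =>
      have hzn : z + n ≠ 0 := h n (Nat.lt_succ_self n)
      have e : (z + (n + 1 : ℕ) : ℂ) = (z + n) + 1 := by push_cast; ring
      rw [e, Complex.Gamma_add_one _ hzn, ih (fun k hk => h k (Nat.lt_succ_of_lt hk)),
        Finset.prod_range_succ]
      ring

lemma rGamma_shift (z : ℝ) (hz : 0 < z) (n : ℕ) :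
    Real.Gamma (z + n) = Real.Gamma z * ∏ k ∈ Finset.range n, (z + k) := by
  induction n with
  | zero => simp
  | succ n ih =>
      have hzn : z + (n : ℝ) ≠ 0 := by positivity
      have e : (z + (n + 1 : ℕ) : ℝ) = (z + n) + 1 := by push_cast; ring
      rw [e, Real.Gamma_add_one hzn, ih, Finset.prod_range_succ]
      ring

lemma telescope (m : ℝ) (hm : 0 < m) (n : ℕ) :
    ∏ k ∈ Finset.range n, (1 + 1 / (m + k)) = (m + n) / m := by
  induction n with
  | zero => simp [div_self hm.ne']
  | succ n ih =>
      have h1 : m + (n : ℝ) ≠ 0 := by positivity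
      rw [Finset.prod_range_succ, ih]
      push_cast
      field_simp
      ring

lemma compact_bound (l₀ : ℕ) (A B T : ℝ) (hBl : B < (l₀ : ℝ) - 1) :
    ∃ C₀ ≥ (1 : ℝ), ∀ s : ℂ, s.re ∈ Set.Icc A B → |s.im| ≤ T →
      (‖Complex.Gamma ((l₀ : ℂ) - s - 1)‖)⁻¹ ≤ C₀ := by
  set K : Set ℂ := {s | s.re ∈ Set.Icc A B ∧ s.im ∈ Set.Icc (-T) T} with hK
  have hKc : IsCompact K := by
    rw [Metric.isCompact_iff_isClosed_bounded]
    refine ⟨(isClosed_Icc.preimage Complex.continuous_re).inter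
        (isClosed_Icc.preimage Complex.continuous_im), ?_⟩
    apply (Metric.isBounded_closedBall (x := (0:ℂ)) (r := |A| + |B| + |T|)).subset
    intro s hs
    obtain ⟨⟨h1, h2⟩, h3, h4⟩ := hs
    simp only [Metric.mem_closedBall, dist_zero_right]
    have e1 : |s.re| ≤ |A| + |B| := by
      have := neg_abs_le A; have := le_abs_self B; have := abs_nonneg A; have := abs_nonneg B
      rw [abs_le]; constructor <;> linarith
    have e2 : |s.im| ≤ |T| := by
      have := neg_abs_le T; have := le_abs_self T
      rw [abs_le]; constructor <;> linarith
    calc ‖s‖ ≤ |s.re| + |s.im| := Complex.norm_le_abs_re_add_abs_im s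
      _ ≤ (|A| + |B|) + |T| := by linarith
  have hne : ∀ s ∈ K, ∀ m : ℕ, (l₀ : ℂ) - s - 1 ≠ -(m : ℂ) := by
    intro s hs m h
    have : ((l₀ : ℂ) - s - 1).re = (-(m : ℂ)).re := by rw [h]
    simp only [Complex.sub_re, Complex.natCast_re, Complex.one_re, Complex.neg_re] at this
    have := hs.1.2
    nlinarith [Nat.cast_nonneg (α := ℝ) m]
  have hg : ContinuousOn (fun s : ℂ => Complex.Gamma ((l₀ : ℂ) - s - 1)) K := by
    intro s hs
    have h1 : ContinuousAt Complex.Gamma ((l₀ : ℂ) - s - 1) :=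
      (Complex.differentiableAt_Gamma _ (hne s hs)).continuousAt
    have h2 : ContinuousAt (fun s : ℂ => (l₀ : ℂ) - s - 1) s := by fun_prop
    exact ContinuousAt.continuousWithinAt (ContinuousAt.comp (g := Complex.Gamma) h1 h2)
  have hcont : ContinuousOn (fun s : ℂ => (‖Complex.Gamma ((l₀ : ℂ) - s - 1)‖)⁻¹) K := by
    apply ContinuousOn.inv₀ (continuous_norm.comp_continuousOn hg)
    intro s hs
    simpa using Complex.Gamma_ne_zero (hne s hs)
  obtain ⟨C, hC⟩ := hKc.exists_bound_of_continuousOn hcont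
  refine ⟨max C 1, le_max_right _ _, fun s h1 h2 => ?_⟩
  have hsK : s ∈ K := ⟨h1, abs_le.mp h2⟩
  have := hC s hsK
  rw [Real.norm_eq_abs] at this
  exact le_max_of_le_left ((le_abs_self _).trans this)


/-- For every compact interval `[A, B] ⊂ (1, l₀ - 2)` and every `T > 1` there is a
constant `C > 0` such that for all `s ∈ ℂ` with `Re s ∈ [A, B]` and all integers
`l ≥ l₀`: `1/|Γ(l - s - 1)| ≤ C (l^{Re s}/Γ(l-1) + T^{-l}/|Γ(-s-1)|)`. -/
theorem stmt12 (l₀ : ℕ) (A B : ℝ) (hA : 1 < A) (hAB : A ≤ B) (hB : B < (l₀ : ℝ) - 2)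
    (T : ℝ) (hT : 1 < T) :
    ∃ C > (0 : ℝ), ∀ s : ℂ, s.re ∈ Set.Icc A B → ∀ l : ℕ, l₀ ≤ l →
      1 / ‖Complex.Gamma ((l : ℂ) - s - 1)‖ ≤
        C * ((l : ℝ) ^ s.re / Real.Gamma ((l : ℝ) - 1) +
          T ^ (-(l : ℝ)) / ‖Complex.Gamma (-s - 1)‖) := by
  obtain ⟨C₀, hC₀1, hC₀⟩ := compact_bound l₀ A B T (by linarith)
  have hΓ₀ : 0 < Real.Gamma ((l₀ : ℝ) - 1) := Real.Gamma_pos_of_pos (by linarith)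
  set Γ₀ := Real.Gamma ((l₀ : ℝ) - 1) with hΓ₀def
  refine ⟨max 1 (C₀ * Γ₀), lt_of_lt_of_le one_pos (le_max_left _ _), fun s hs l hl => ?_⟩
  set C := max 1 (C₀ * Γ₀) with hCdef
  obtain ⟨hσA, hσB⟩ := hs
  set σ := s.re with hσdef
  have hlR : (l₀ : ℝ) ≤ (l : ℝ) := Nat.cast_le.mpr hl
  have hGlpos : 0 < Real.Gamma ((l : ℝ) - 1) := Real.Gamma_pos_of_pos (by linarith)
  have ht1 : 0 ≤ (l : ℝ) ^ σ / Real.Gamma ((l : ℝ) - 1) := by positivity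
  have ht2 : 0 ≤ T ^ (-(l : ℝ)) / ‖Complex.Gamma (-s - 1)‖ := by positivity
  by_cases hcase : |s.im| ≤ T
  · -- low imaginary part: use the first term
    set n := l - l₀ with hndef
    have hln : l = l₀ + n := (Nat.add_sub_cancel' hl).symm
    set w : ℂ := (l₀ : ℂ) - s - 1 with hwdef
    have hre : ∀ k : ℕ, (w + k).re = (l₀ : ℝ) - σ - 1 + k := by
      intro k; simp [hwdef, Complex.add_re, Complex.sub_re, hσdef]
    have hwk : ∀ k : ℕ, k < n → w + k ≠ 0 := by
      intro k _ h
      have : (w + k).re = 0 := by rw [h]; simp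
      rw [hre k] at this
      have : (0:ℝ) ≤ (k:ℝ) := Nat.cast_nonneg k
      nlinarith
    have hid : (l : ℂ) - s - 1 = w + n := by
      rw [hln]; push_cast; ring
    have hGamEq : Complex.Gamma ((l : ℂ) - s - 1)
        = Complex.Gamma w * ∏ k ∈ Finset.range n, (w + k) := by
      rw [hid]; exact cGamma_shift w n hwk
    set Q : ℝ := ∏ k ∈ Finset.range n, ((l₀ : ℝ) - σ - 1 + k) with hQdef
    have hfacpos : ∀ k ∈ Finset.range n, (0:ℝ) < (l₀ : ℝ) - σ - 1 + k := by
      intro k _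
      have : (0:ℝ) ≤ (k:ℝ) := Nat.cast_nonneg k
      nlinarith
    have hQpos : 0 < Q := Finset.prod_pos hfacpos
    have hPQ : Q ≤ ‖∏ k ∈ Finset.range n, (w + k)‖ := by
      rw [norm_prod]
      apply Finset.prod_le_prod (fun k hk => (hfacpos k hk).le)
      intro k _
      rw [← hre k]
      exact Complex.re_le_norm _
    have hG0pos : 0 < ‖Complex.Gamma w‖ := by
      rw [norm_pos_iff]
      apply Complex.Gamma_ne_zero_of_re_pos
      have := hre 0
      simp only [Nat.cast_zero, add_zero] at this
      rw [this]; linarith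
    have hPpos : 0 < ‖∏ k ∈ Finset.range n, (w + k)‖ := lt_of_lt_of_le hQpos hPQ
    -- step 1 : 1/G ≤ C₀ / Q
    have step1 : 1 / ‖Complex.Gamma ((l : ℂ) - s - 1)‖ ≤ C₀ / Q := by
      rw [hGamEq, norm_mul]
      rw [div_mul_eq_div_div_swap, one_div, div_eq_mul_inv]
      have h1 : (‖∏ k ∈ Finset.range n, (w + k)‖)⁻¹ ≤ Q⁻¹ :=
        inv_anti₀ hQpos hPQ
      have h2 : (‖Complex.Gamma w‖)⁻¹ ≤ C₀ := hC₀ s ⟨hσA, hσB⟩ hcase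
      calc (‖∏ k ∈ Finset.range n, (w + k)‖)⁻¹
            * (‖Complex.Gamma w‖)⁻¹
          ≤ Q⁻¹ * C₀ := by
            apply mul_le_mul h1 h2 (by positivity) (by positivity)
        _ = C₀ / Q := by rw [div_eq_mul_inv]; ring
    -- real Gamma factorization
    set R : ℝ := ∏ k ∈ Finset.range n, ((l₀ : ℝ) - 1 + k) with hRdef
    have hRGam : Real.Gamma ((l : ℝ) - 1) = Γ₀ * R := by
      have hz : (0:ℝ) < (l₀ : ℝ) - 1 := by linarith
      have : (l : ℝ) - 1 = ((l₀ : ℝ) - 1) + n := by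
        rw [hln]; push_cast; ring
      rw [this, rGamma_shift _ hz n]
    have hRpos : 0 < R := by
      apply Finset.prod_pos
      intro k _
      have : (0:ℝ) ≤ (k:ℝ) := Nat.cast_nonneg k
      nlinarith
    -- R ≤ Q * l ^ σ
    have hlpos : (0:ℝ) < (l:ℝ) := by linarith
    have hRQ : R ≤ Q * (l : ℝ) ^ σ := by
      set m : ℝ := (l₀ : ℝ) - 1 - σ with hmdef
      have hm1 : (1:ℝ) < m := by simp only [hmdef]; linarith
      have hmk : ∀ k : ℕ, (0:ℝ) < m + k := by
        intro k; have : (0:ℝ) ≤ (k:ℝ) := Nat.cast_nonneg k; linarith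
      have hsplit : R = Q * ∏ k ∈ Finset.range n, (1 + σ * (1 / (m + k))) := by
        rw [hQdef, hRdef, ← Finset.prod_mul_distrib]
        apply Finset.prod_congr rfl
        intro k _
        have h0 := (hmk k).ne'
        have : (l₀ : ℝ) - σ - 1 + k = m + k := by rw [hmdef]; ring
        rw [this]
        field_simp
        ring
      have hS : ∏ k ∈ Finset.range n, (1 + σ * (1 / (m + k))) ≤ (l : ℝ) ^ σ := by
        have hstep : ∏ k ∈ Finset.range n, (1 + σ * (1 / (m + k)))
            ≤ ∏ k ∈ Finset.range n, (1 + 1 / (m + k)) ^ σ := by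
          apply Finset.prod_le_prod
          · intro k _
            have := hmk k
            have hσ0 : (0:ℝ) < σ := by linarith
            positivity
          · intro k _
            have hk0 : (0:ℝ) < m + k := hmk k
            have h01 : (0:ℝ) ≤ 1 / (m + k) := by positivity
            exact one_add_mul_self_le_rpow_one_add (by linarith) (by linarith)
        have hprodpow : ∏ k ∈ Finset.range n, (1 + 1 / (m + k)) ^ σ
            = ((m + n) / m) ^ σ := by
          rw [Real.finset_prod_rpow _ _ (fun k _ => by positivity) σ,
            telescope m (by linarith) n]
        rw [hprodpow] at hstep
        apply hstep.trans
        apply Real.rpow_le_rpow (by positivity) _ (by linarith)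
        have hmn : (0:ℝ) ≤ m + n := by positivity
        calc (m + n) / m ≤ m + n := by
              apply div_le_self hmn (by linarith)
          _ ≤ (l : ℝ) := by
              have : (n : ℝ) = (l : ℝ) - (l₀ : ℝ) := by rw [hln]; push_cast; ring
              rw [this, hmdef]; linarith
      calc R = Q * ∏ k ∈ Finset.range n, (1 + σ * (1 / (m + k))) := hsplit
        _ ≤ Q * (l : ℝ) ^ σ := by
            apply mul_le_mul_of_nonneg_left hS hQpos.le
    -- conclude
    have hfin : C₀ / Q ≤ C * ((l : ℝ) ^ σ / Real.Gamma ((l : ℝ) - 1)) := by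
      have hlσ : (0:ℝ) < (l : ℝ) ^ σ := Real.rpow_pos_of_pos hlpos σ
      have hC₀pos : (0:ℝ) < C₀ := by linarith
      calc C₀ / Q = (C₀ * Γ₀) * ((l : ℝ) ^ σ / (Γ₀ * (Q * (l : ℝ) ^ σ))) := by
            field_simp
        _ ≤ (C₀ * Γ₀) * ((l : ℝ) ^ σ / (Γ₀ * R)) := by
            gcongr
        _ = (C₀ * Γ₀) * ((l : ℝ) ^ σ / Real.Gamma ((l : ℝ) - 1)) := by rw [hRGam]
        _ ≤ C * ((l : ℝ) ^ σ / Real.Gamma ((l : ℝ) - 1)) := by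
            apply mul_le_mul_of_nonneg_right (le_max_right _ _) ht1
    have hmain := step1.trans hfin
    have hC0le : (0:ℝ) ≤ C := le_trans zero_le_one (le_max_left _ _)
    have hCt2 : 0 ≤ C * (T ^ (-(l : ℝ)) / ‖Complex.Gamma (-s - 1)‖) :=
      mul_nonneg hC0le ht2
    calc 1 / ‖Complex.Gamma ((l : ℂ) - s - 1)‖
        ≤ C * ((l : ℝ) ^ σ / Real.Gamma ((l : ℝ) - 1)) := hmain
      _ ≤ C * ((l : ℝ) ^ σ / Real.Gamma ((l : ℝ) - 1))
          + C * (T ^ (-(l : ℝ)) / ‖Complex.Gamma (-s - 1)‖) := by linarith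
      _ = C * ((l : ℝ) ^ σ / Real.Gamma ((l : ℝ) - 1)
          + T ^ (-(l : ℝ)) / ‖Complex.Gamma (-s - 1)‖) := by ring
  · -- high imaginary part: use the second term
    push_neg at hcase
    have himne : s.im ≠ 0 := by
      intro h; rw [h] at hcase; simp at hcase; linarith
    set z : ℂ := -s - 1 with hzdef
    have hzk : ∀ k : ℕ, k < l → z + k ≠ 0 := by
      intro k _ h
      have : (z + k).im = 0 := by rw [h]; simp
      simp [hzdef] at this
      exact himne this
    have hid : (l : ℂ) - s - 1 = z + l := by push_cast; ring
    have hGamEq : Complex.Gamma ((l : ℂ) - s - 1)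
        = Complex.Gamma z * ∏ k ∈ Finset.range l, (z + k) := by
      rw [hid]; exact cGamma_shift z l hzk
    have hzne : Complex.Gamma z ≠ 0 := by
      apply Complex.Gamma_ne_zero
      intro m h
      have : (z : ℂ).im = (-(m:ℂ)).im := by rw [h]
      simp [hzdef] at this
      exact himne this
    have hG0pos : 0 < ‖Complex.Gamma z‖ := norm_pos_iff.mpr hzne
    have hTl : (0:ℝ) < T ^ l := by positivity
    have hPT : T ^ l ≤ ‖∏ k ∈ Finset.range l, (z + k)‖ := by
      rw [norm_prod]
      calc T ^ l = ∏ _k ∈ Finset.range l, T := by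
            rw [Finset.prod_const, Finset.card_range]
        _ ≤ ∏ k ∈ Finset.range l, ‖z + k‖ := by
            apply Finset.prod_le_prod (fun _ _ => by linarith)
            intro k _
            have h1 : |(z + k).im| ≤ ‖z + k‖ := Complex.abs_im_le_norm _
            have h2 : (z + k).im = -s.im := by simp [hzdef]
            rw [h2, abs_neg] at h1
            linarith
    have step1 : 1 / ‖Complex.Gamma ((l : ℂ) - s - 1)‖
        ≤ T ^ (-(l : ℝ)) / ‖Complex.Gamma z‖ := by
      rw [hGamEq, norm_mul]
      rw [Real.rpow_neg (by linarith : (0:ℝ) ≤ T), Real.rpow_natCast]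
      calc 1 / (‖Complex.Gamma z‖ * ‖∏ k ∈ Finset.range l, (z + k)‖)
          ≤ 1 / (‖Complex.Gamma z‖ * T ^ l) :=
            one_div_le_one_div_of_le (by positivity)
              (mul_le_mul_of_nonneg_left hPT hG0pos.le)
        _ = (T ^ l)⁻¹ / ‖Complex.Gamma z‖ := by
            rw [one_div, mul_inv, div_eq_mul_inv]; ring
    have hCge1 : (1:ℝ) ≤ C := le_max_left _ _
    have hC0le : (0:ℝ) ≤ C := le_trans zero_le_one hCge1
    rw [hzdef] at step1
    have hCt1 : 0 ≤ C * ((l : ℝ) ^ σ / Real.Gamma ((l : ℝ) - 1)) := mul_nonneg hC0le ht1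
    calc 1 / ‖Complex.Gamma ((l : ℂ) - s - 1)‖
        ≤ T ^ (-(l : ℝ)) / ‖Complex.Gamma (-s - 1)‖ := step1
      _ ≤ C * (T ^ (-(l : ℝ)) / ‖Complex.Gamma (-s - 1)‖) :=
          le_mul_of_one_le_left ht2 hCge1
      _ ≤ C * ((l : ℝ) ^ σ / Real.Gamma ((l : ℝ) - 1))
          + C * (T ^ (-(l : ℝ)) / ‖Complex.Gamma (-s - 1)‖) := by linarith
      _ = C * ((l : ℝ) ^ σ / Real.Gamma ((l : ℝ) - 1)
          + T ^ (-(l : ℝ)) / ‖Complex.Gamma (-s - 1)‖) := by ring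
end

section
/- For Re(s) > 1, A > 0 and γ ∈ ℂ, one has ∫_ℂ (A² + |β|²)^{−(s+1)} exp(4πi Re(β γ̄)) dβ = (2π (2π|γ|)^s A^{−s} / Γ(s+1)) · K_s(4π A |γ|), where dβ is Lebesgue measure on ℂ ≅ ℝ² and K_s is the modified Bessel function of the second kind. -/
open Real Set MeasureTheory
open scoped RealInnerProductSpace

/-- The modified Bessel (Macdonald) function of the second kind, via the integral
representation `K_s(z) = (1/2) ∫₀^∞ exp(-(v + v⁻¹) z / 2) v^{s-1} dv`. -/
noncomputable def besselK (s : ℂ) (z : ℝ) : ℂ :=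
  (1 / 2) * ∫ v in Set.Ioi (0 : ℝ), Complex.exp (-(((v + v⁻¹) * z : ℝ) : ℂ) / 2) * (v : ℂ) ^ (s - 1)

namespace StmtAux14

lemma gamma_rep (s : ℂ) (hs : 1 < s.re) (x : ℝ) (hx : 0 < x) :
    ((x : ℂ)) ^ (-(s + 1)) =
      (∫ t in Ioi (0 : ℝ), (t : ℂ) ^ s * Complex.exp (-(x * t))) / Complex.Gamma (s + 1) := by
  have h := Complex.integral_cpow_mul_exp_neg_mul_Ioi (a := s + 1) (r := x)
    (by simp; linarith) hx
  simp only [add_sub_cancel_right] at h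
  have hΓ : Complex.Gamma (s + 1) ≠ 0 := by
    apply Complex.Gamma_ne_zero_of_re_pos; simp; linarith
  rw [h, mul_div_cancel_right₀ _ hΓ]
  rw [one_div, Complex.inv_cpow _ _
    (by rw [Complex.arg_ofReal_of_nonneg hx.le]; exact pi_ne_zero.symm), ← Complex.cpow_neg]

lemma inner_eq (γ β : ℂ) : (⟪γ, β⟫ : ℝ) = (β * (starRingEnd ℂ) γ).re := by
  simp [Complex.inner]

end StmtAux14

/-- For `Re s > 1`, `A > 0` and `γ ∈ ℂ∖{0}`,
`∫_ℂ (A² + |β|²)^{-(s+1)} exp(4πi Re(β γ̄)) dβ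
  = (2π (2π|γ|)^s A^{-s} / Γ(s+1)) K_s(4π A |γ|)`. -/
theorem stmt14 (s : ℂ) (hs : 1 < s.re) (A : ℝ) (hA : 0 < A) (γ : ℂ) (hγ : γ ≠ 0) :
    (∫ β : ℂ, ((A ^ 2 + ‖β‖ ^ 2 : ℝ) : ℂ) ^ (-(s + 1)) *
        Complex.exp (4 * (π : ℂ) * Complex.I * ((β * (starRingEnd ℂ) γ).re : ℂ))) =
      2 * (π : ℂ) * ((2 * π * ‖γ‖ : ℝ) : ℂ) ^ s * (A : ℂ) ^ (-s) /
          Complex.Gamma (s + 1) * besselK s (4 * π * A * ‖γ‖) := by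
  have ha : 0 < ‖γ‖ := norm_pos_iff.mpr hγ
  set a : ℝ := ‖γ‖ with ha_def
  set z : ℝ := 4 * π * A * a with hz_def
  have hz : 0 < z := by rw [hz_def]; positivity
  set c4 : ℂ := 4 * (π : ℂ) * Complex.I with hc4
  set H : ℝ → ℂ → ℂ := fun t β => (t : ℂ) ^ s * Complex.exp (-((A : ℂ) ^ 2 * t)) *
      Complex.exp (-(t : ℂ) * ‖β‖ ^ 2 + c4 * (⟪γ, β⟫ : ℝ)) with hH
  have hΓ : Complex.Gamma (s + 1) ≠ 0 := by
    apply Complex.Gamma_ne_zero_of_re_pos; simp; linarith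
  -- Step 1: pointwise Gamma representation
  have step1 : ∀ β : ℂ, ((A ^ 2 + ‖β‖ ^ 2 : ℝ) : ℂ) ^ (-(s + 1)) *
      Complex.exp (c4 * ((β * (starRingEnd ℂ) γ).re : ℂ)) =
      (∫ t in Ioi (0 : ℝ), H t β) / Complex.Gamma (s + 1) := by
    intro β
    have hx : (0 : ℝ) < A ^ 2 + ‖β‖ ^ 2 := by positivity
    rw [StmtAux14.gamma_rep s hs _ hx, div_mul_eq_mul_div, ← MeasureTheory.integral_mul_const]
    congr 1
    refine setIntegral_congr_fun measurableSet_Ioi fun t ht => ?_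
    have harg : (-(((A ^ 2 + ‖β‖ ^ 2 : ℝ) : ℂ) * t)) +
        c4 * ((β * (starRingEnd ℂ) γ).re : ℂ) =
        (-((A : ℂ) ^ 2 * t)) + ((-(t : ℂ) * ‖β‖ ^ 2 + c4 * (⟪γ, β⟫ : ℝ))) := by
      rw [StmtAux14.inner_eq γ β]
      push_cast
      ring
    simp only [hH]
    rw [mul_assoc, ← Complex.exp_add, harg, Complex.exp_add, ← mul_assoc]
  -- measurability of the kernel on the product space
  have hmeas : AEStronglyMeasurable (Function.uncurry fun β t => H t β)
      (volume.prod (volume.restrict (Ioi (0 : ℝ)))) := by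
    have hg : Measurable fun p : ℂ × ℝ =>
        Complex.exp ((Real.log p.2 : ℂ) * s) * Complex.exp (-((A : ℂ) ^ 2 * p.2)) *
          Complex.exp (-(p.2 : ℂ) * ‖p.1‖ ^ 2 + c4 * (⟪γ, p.1⟫ : ℝ)) := by
      refine Measurable.mul (Measurable.mul ?_ ?_) ?_
      · exact Complex.measurable_exp.comp
          ((Complex.measurable_ofReal.comp (Real.measurable_log.comp measurable_snd)).mul_const s)
      · exact (Complex.continuous_exp.comp (by continuity)).measurable
      · refine (Complex.continuous_exp.comp ?_).measurable
        refine Continuous.add ?_ ?_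
        · exact ((Complex.continuous_ofReal.comp continuous_snd).neg.mul
            ((Complex.continuous_ofReal.comp (continuous_fst.norm)).pow 2))
        · exact continuous_const.mul (Complex.continuous_ofReal.comp
            (Continuous.inner continuous_const continuous_fst))
    refine hg.aestronglyMeasurable.congr ?_
    have hae : ∀ᵐ p : ℂ × ℝ ∂(volume.prod (volume.restrict (Ioi (0 : ℝ)))),
        p.2 ∈ Ioi (0 : ℝ) := by
      rw [ae_iff]
      have hset : {p : ℂ × ℝ | ¬ p.2 ∈ Ioi (0 : ℝ)} = (univ : Set ℂ) ×ˢ (Ioi (0 : ℝ))ᶜ := by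
        ext p; simp [Set.mem_prod]
      have hempty : Iic (0 : ℝ) ∩ Ioi 0 = ∅ := by
        ext x
        simp only [Set.mem_inter_iff, Set.mem_Iic, Set.mem_Ioi, Set.mem_empty_iff_false,
          iff_false, not_and, not_lt]
        exact fun h => h
      rw [hset, Measure.prod_prod, Measure.restrict_apply measurableSet_Ioi.compl]
      simp [hempty]
    filter_upwards [hae] with p hp
    have hp0 : (p.2 : ℂ) ≠ 0 := Complex.ofReal_ne_zero.2 (ne_of_gt hp)
    show _ = H p.2 p.1
    rw [hH]
    congr 2
    rw [Complex.cpow_def_of_ne_zero hp0, Complex.ofReal_log (le_of_lt hp)]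
  -- integrability of the kernel on the product space
  have hint : Integrable (Function.uncurry fun β t => H t β)
      (volume.prod (volume.restrict (Ioi (0 : ℝ)))) := by
    rw [MeasureTheory.integrable_prod_iff' hmeas]
    constructor
    · filter_upwards [ae_restrict_mem measurableSet_Ioi] with t ht
      have h := (GaussianFourier.integrable_cexp_neg_mul_sq_norm_add
        (show (0 : ℝ) < ((t : ℂ)).re by simpa using ht) c4 γ).const_mul
        ((t : ℂ) ^ s * Complex.exp (-((A : ℂ) ^ 2 * t)))
      simpa [hH, Function.uncurry, mul_assoc] using h
    · have hbase : IntegrableOn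
          (fun t : ℝ => π * (t ^ (s.re - 1) * rexp (-(A ^ 2) * t))) (Ioi 0) := by
        have h := integrableOn_rpow_mul_exp_neg_mul_rpow
          (show (-1 : ℝ) < s.re - 1 by linarith) (show (0 : ℝ) < 1 by norm_num)
          (show (0 : ℝ) < A ^ 2 by positivity)
        simp only [Real.rpow_one] at h
        exact h.const_mul π
      refine hbase.congr ?_
      filter_upwards [ae_restrict_mem measurableSet_Ioi] with t ht
      have ht' : (0 : ℝ) < t := ht
      have hnorm : (fun β : ℂ => ‖Function.uncurry (fun β t => H t β) (β, t)‖) =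
          fun β : ℂ => (t ^ s.re * rexp (-(A ^ 2 * t))) * rexp (-t * ‖β‖ ^ 2) := by
        funext β
        simp only [Function.uncurry, hH, norm_mul,
          Complex.norm_exp]
        rw [Complex.norm_cpow_eq_rpow_re_of_pos ht']
        have e1 : -((A : ℂ) ^ 2 * (t : ℂ)) = ((-(A ^ 2 * t) : ℝ) : ℂ) := by push_cast; ring
        have e2 : (-(t : ℂ) * (‖β‖ : ℂ) ^ 2 + c4 * ((⟪γ, β⟫ : ℝ) : ℂ)).re =
            -t * ‖β‖ ^ 2 := by
          rw [Complex.add_re]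
          have e3 : -(t : ℂ) * (‖β‖ : ℂ) ^ 2 = ((-t * ‖β‖ ^ 2 : ℝ) : ℂ) := by
            push_cast; ring
          rw [e3, Complex.ofReal_re, hc4]
          simp [Complex.mul_re, Complex.mul_im]
        rw [e1, Complex.ofReal_re, e2]
      rw [hnorm, MeasureTheory.integral_const_mul,
        GaussianFourier.integral_rexp_neg_mul_sq_norm ht', Complex.finrank_real_complex]
      rw [show ((2 : ℕ) / 2 : ℝ) = 1 by norm_num, Real.rpow_one]
      rw [Real.rpow_sub ht', Real.rpow_one]
      field_simp
  -- Step 2: Gaussian integral in β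
  have step2 : ∀ t ∈ Ioi (0 : ℝ), (∫ β : ℂ, H t β) =
      (π : ℂ) * ((t : ℂ) ^ (s - 1) *
        Complex.exp (-((A ^ 2 * t + 4 * π ^ 2 * a ^ 2 / t : ℝ) : ℂ))) := by
    intro t ht
    have ht' : (0 : ℝ) < t := ht
    have h0 : (t : ℂ) ≠ 0 := Complex.ofReal_ne_zero.2 ht'.ne'
    rw [hH, MeasureTheory.integral_const_mul,
      GaussianFourier.integral_cexp_neg_mul_sq_norm_add
        (show (0 : ℝ) < ((t : ℂ)).re by simpa using ht') c4 γ]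
    rw [show ((Module.finrank ℝ ℂ : ℂ) / 2) = 1 by
        rw [Complex.finrank_real_complex]; norm_num, Complex.cpow_one]
    have hexp : -((A : ℂ) ^ 2 * t) + c4 ^ 2 * ‖γ‖ ^ 2 / (4 * (t : ℂ)) =
        -((A ^ 2 * t + 4 * π ^ 2 * a ^ 2 / t : ℝ) : ℂ) := by
      have hc42 : c4 ^ 2 = -(16 * (π : ℂ) ^ 2) := by
        rw [hc4]; ring_nf; rw [Complex.I_sq]; ring
      rw [hc42, ← ha_def]
      push_cast
      field_simp
      ring
    have hpow : (t : ℂ) ^ s = (t : ℂ) ^ (s - 1) * t := by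
      conv_lhs => rw [show s = s - 1 + 1 by ring, Complex.cpow_add _ _ h0, Complex.cpow_one]
    calc (t : ℂ) ^ s * Complex.exp (-((A : ℂ) ^ 2 * t)) *
          ((π : ℂ) / t * Complex.exp (c4 ^ 2 * ‖γ‖ ^ 2 / (4 * (t : ℂ))))
        = (π : ℂ) * ((t : ℂ) ^ (s - 1) * (Complex.exp (-((A : ℂ) ^ 2 * t)) *
            Complex.exp (c4 ^ 2 * ‖γ‖ ^ 2 / (4 * (t : ℂ))))) := by
          rw [hpow]; field_simp
      _ = _ := by rw [← Complex.exp_add, hexp]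
  -- Step 3: substitution t = (2πa/A) x
  set cc : ℝ := 2 * π * a / A with hcc_def
  have hcc : 0 < cc := by rw [hcc_def]; positivity
  set g : ℝ → ℂ := fun t => (t : ℂ) ^ (s - 1) *
    Complex.exp (-((A ^ 2 * t + 4 * π ^ 2 * a ^ 2 / t : ℝ) : ℂ)) with hg_def
  have hsub : (∫ t in Ioi (0 : ℝ), g t) = cc • ∫ x in Ioi (0 : ℝ), g (cc * x) := by
    rw [MeasureTheory.integral_comp_mul_left_Ioi g 0 hcc, mul_zero, smul_smul,
      mul_inv_cancel₀ hcc.ne', one_smul]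
  have hgc : ∀ x ∈ Ioi (0 : ℝ), g (cc * x) = (cc : ℂ) ^ (s - 1) *
      (Complex.exp (-(((x + x⁻¹) * z : ℝ) : ℂ) / 2) * (x : ℂ) ^ (s - 1)) := by
    intro x hx
    have hx' : (0 : ℝ) < x := hx
    have hreal : A ^ 2 * (cc * x) + 4 * π ^ 2 * a ^ 2 / (cc * x) = (x + x⁻¹) * z / 2 := by
      rw [hcc_def, hz_def]
      field_simp
      ring
    have hexp : -((A ^ 2 * (cc * x) + 4 * π ^ 2 * a ^ 2 / (cc * x) : ℝ) : ℂ) =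
        -(((x + x⁻¹) * z : ℝ) : ℂ) / 2 := by
      rw [hreal]; push_cast; ring
    rw [hg_def]
    simp only
    rw [Complex.ofReal_mul, Complex.mul_cpow_ofReal_nonneg hcc.le hx'.le, hexp]
    ring
  -- assemble everything
  calc (∫ β : ℂ, ((A ^ 2 + ‖β‖ ^ 2 : ℝ) : ℂ) ^ (-(s + 1)) *
        Complex.exp (c4 * ((β * (starRingEnd ℂ) γ).re : ℂ)))
      = ∫ β : ℂ, (∫ t in Ioi (0 : ℝ), H t β) / Complex.Gamma (s + 1) := by
        simp_rw [step1]
    _ = (∫ β : ℂ, ∫ t in Ioi (0 : ℝ), H t β) / Complex.Gamma (s + 1) := by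
        rw [integral_div]
    _ = (∫ t in Ioi (0 : ℝ), ∫ β : ℂ, H t β) / Complex.Gamma (s + 1) := by
        rw [MeasureTheory.integral_integral_swap hint]
    _ = (∫ t in Ioi (0 : ℝ), (π : ℂ) * g t) / Complex.Gamma (s + 1) := by
        congr 1
        exact setIntegral_congr_fun measurableSet_Ioi step2
    _ = ((π : ℂ) * ∫ t in Ioi (0 : ℝ), g t) / Complex.Gamma (s + 1) := by
        rw [MeasureTheory.integral_const_mul]
    _ = ((π : ℂ) * (cc • ((cc : ℂ) ^ (s - 1) *
          ∫ x in Ioi (0 : ℝ), Complex.exp (-(((x + x⁻¹) * z : ℝ) : ℂ) / 2) * (x : ℂ) ^ (s - 1)))) /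
          Complex.Gamma (s + 1) := by
        rw [hsub, setIntegral_congr_fun measurableSet_Ioi hgc,
          MeasureTheory.integral_const_mul]
    _ = 2 * (π : ℂ) * ((2 * π * a : ℝ) : ℂ) ^ s * (A : ℂ) ^ (-s) /
          Complex.Gamma (s + 1) * besselK s z := by
        have hK : (∫ x in Ioi (0 : ℝ),
            Complex.exp (-(((x + x⁻¹) * z : ℝ) : ℂ) / 2) * (x : ℂ) ^ (s - 1)) =
            2 * besselK s z := by
          rw [besselK]; ring
        have hccs : (cc : ℂ) * (cc : ℂ) ^ (s - 1) = ((2 * π * a : ℝ) : ℂ) ^ s * (A : ℂ) ^ (-s) := by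
          have hcc0 : (cc : ℂ) ≠ 0 := Complex.ofReal_ne_zero.2 hcc.ne'
          have h1 : (cc : ℂ) * (cc : ℂ) ^ (s - 1) = (cc : ℂ) ^ s := by
            conv_rhs => rw [show s = 1 + (s - 1) by ring, Complex.cpow_add _ _ hcc0,
              Complex.cpow_one]
          rw [h1, show (cc : ℝ) = (2 * π * a) * A⁻¹ by rw [hcc_def]; field_simp,
            Complex.ofReal_mul, Complex.mul_cpow_ofReal_nonneg (by positivity) (by positivity),
            Complex.ofReal_inv, Complex.inv_cpow _ _
              (by rw [Complex.arg_ofReal_of_nonneg hA.le]; exact pi_ne_zero.symm),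
            ← Complex.cpow_neg]
        rw [hK, Complex.real_smul]
        rw [show (cc : ℂ) * ((cc : ℂ) ^ (s - 1) * (2 * besselK s z)) =
            ((cc : ℂ) * (cc : ℂ) ^ (s - 1)) * (2 * besselK s z) by ring, hccs]
        ring
end

section
/- The set {1₄, w₁, w₂, n(T_θ†)w₂} is a complete set of representatives of the double coset space ι(B^#(ℚ)) \ GSp₄(ℚ) / P(ℚ), where P is the Siegel parabolic, B^# is the upper-triangular Borel of the unitary similitude group G^# embedded via ι = ι_θ, w₁ = diag-block permutation matrix [[1,0,0,0],[0,0,0,1],[0,0,1,0],[0,−1,0,0]], and w₂ = ι_θ([[0,1],[1,0]]). -/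
open Matrix

noncomputable section

/-- 4×4 matrices, written with the block index type `Fin 2 ⊕ Fin 2`. -/
abbrev Mat4 := Matrix (Fin 2 ⊕ Fin 2) (Fin 2 ⊕ Fin 2) ℚ

/-- The standard symplectic form matrix `[[0, 1₂], [-1₂, 0]]`. -/
def Jmat : Mat4 := Matrix.fromBlocks 0 1 (-1) 0

/-- `g ∈ GSp₂(ℚ) = GSp₄(ℚ)`: `gᵀ J g = ν(g) J` with similitude `ν(g) ≠ 0`. -/
def IsGSp (g : Mat4) : Prop := ∃ ν : ℚ, ν ≠ 0 ∧ gᵀ * Jmat * g = ν • Jmat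

/-- The Levi element `m(A, c) = diag(A, c·(Aᵀ)⁻¹)` of the Siegel parabolic. -/
def mMat (A : Matrix (Fin 2) (Fin 2) ℚ) (c : ℚ) : Mat4 :=
  Matrix.fromBlocks A 0 0 (c • A⁻¹ᵀ)

/-- The unipotent element `n(B) = [[1₂, B], [0, 1₂]]`. -/
def nMat (B : Matrix (Fin 2) (Fin 2) ℚ) : Mat4 := Matrix.fromBlocks 1 B 0 1

/-- `g ∈ P(ℚ)`, the Siegel parabolic: block upper-triangular elements of `GSp₄(ℚ)`. -/
def IsSiegelP (g : Mat4) : Prop := IsGSp g ∧ Matrix.toBlocks₂₁ g = 0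

/-- The regular-representation matrix `I_θ(a + bθ) = [[a, -bN], [b, a + tb]]`. -/
def Iθ (t N a b : ℚ) : Matrix (Fin 2) (Fin 2) ℚ := !![a, -b * N; b, a + t * b]

/-- The symmetric matrix `X_β = [[-b₂t - b₃N, b₂], [b₂, b₃]]` attached to
`β = b₂ + b₃θ ∈ E`. -/
def Xβ (t N b₂ b₃ : ℚ) : Matrix (Fin 2) (Fin 2) ℚ :=
  !![-b₂ * t - b₃ * N, b₂; b₂, b₃]

/-- The image `ι_θ(B^#(ℚ))` of the upper-triangular Borel of `G^#`: the set of all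
`m(I_θ(τ), λ) n(X_β)` with `τ ∈ E^×`, `λ ∈ ℚ^×`, `β ∈ E`. -/
def iotaBorel (t N : ℚ) : Set Mat4 :=
  {g | ∃ a b lam b₂ b₃ : ℚ, (a ≠ 0 ∨ b ≠ 0) ∧ lam ≠ 0 ∧
    g = mMat (Iθ t N a b) lam * nMat (Xβ t N b₂ b₃)}

/-- `w₁ = [[1,0,0,0],[0,0,0,1],[0,0,1,0],[0,-1,0,0]]` in block form. -/
def w₁mat : Mat4 :=
  Matrix.fromBlocks !![1, 0; 0, 0] !![0, 0; 0, 1] !![0, 0; 0, -1] !![1, 0; 0, 0]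

/-- `w₂ = ι_θ([[0,1],[1,0]]) = [[0,0,-t,1],[0,0,1,0],[0,1,0,0],[1,t,0,0]]` in
block form. -/
def w₂mat (t : ℚ) : Mat4 :=
  Matrix.fromBlocks 0 !![-t, 1; 1, 0] !![0, 1; 1, t] 0

/-- `T_θ = [[1, t/2], [t/2, N]]`. -/
def Tθmat (t N : ℚ) : Matrix (Fin 2) (Fin 2) ℚ := !![1, t / 2; t / 2, N]

abbrev M2 := Matrix (Fin 2) (Fin 2) ℚ

lemma toB11_smul (c : ℚ) (g : Mat4) : toBlocks₁₁ (c • g) = c • toBlocks₁₁ g := rfl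

lemma toB21_smul (c : ℚ) (g : Mat4) : toBlocks₂₁ (c • g) = c • toBlocks₂₁ g := rfl

lemma toB12_smul (c : ℚ) (g : Mat4) : toBlocks₁₂ (c • g) = c • toBlocks₁₂ g := rfl

lemma toB11_mul (x y : Mat4) :
    toBlocks₁₁ (x * y) =
      toBlocks₁₁ x * toBlocks₁₁ y + toBlocks₁₂ x * toBlocks₂₁ y := by
  conv_lhs => rw [← fromBlocks_toBlocks x, ← fromBlocks_toBlocks y, fromBlocks_multiply]
  exact toBlocks_fromBlocks₁₁ _ _ _ _

lemma toB21_mul (x y : Mat4) :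
    toBlocks₂₁ (x * y) =
      toBlocks₂₁ x * toBlocks₁₁ y + toBlocks₂₂ x * toBlocks₂₁ y := by
  conv_lhs => rw [← fromBlocks_toBlocks x, ← fromBlocks_toBlocks y, fromBlocks_multiply]
  exact toBlocks_fromBlocks₂₁ _ _ _ _

lemma conj_blocks (A B C D : M2) :
    (fromBlocks A B C D)ᵀ * Jmat * fromBlocks A B C D =
      fromBlocks (Aᵀ*C - Cᵀ*A) (Aᵀ*D - Cᵀ*B) (Bᵀ*C - Dᵀ*A) (Bᵀ*D - Dᵀ*B) := by
  rw [Jmat, fromBlocks_transpose, fromBlocks_multiply, fromBlocks_multiply]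
  simp only [Matrix.mul_zero, Matrix.mul_one, Matrix.mul_neg, zero_add,
    add_zero, Matrix.neg_mul, Matrix.zero_mul, sub_eq_neg_add]

lemma smul_J (ν : ℚ) : ν • Jmat = fromBlocks 0 (ν • (1 : M2)) (-(ν • (1 : M2))) 0 := by
  rw [Jmat, fromBlocks_smul]; congr 1 <;> simp

lemma isGSp_of_blocks {A B C D : M2} {ν : ℚ} (hν : ν ≠ 0)
    (h1 : Aᵀ*C = Cᵀ*A) (h2 : Bᵀ*D = Dᵀ*B) (h3 : Aᵀ*D - Cᵀ*B = ν • (1:M2)) :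
    IsGSp (fromBlocks A B C D) := by
  refine ⟨ν, hν, ?_⟩
  rw [conj_blocks, smul_J]
  have h4 : Bᵀ*C - Dᵀ*A = -(ν • (1:M2)) := by
    have := congrArg Matrix.transpose h3
    simpa [Matrix.transpose_sub, Matrix.transpose_mul, Matrix.transpose_smul,
      neg_sub] using congrArg Neg.neg this
  rw [h1, sub_self, h2, sub_self, h3, h4]

lemma isGSp_blocks {A B C D : M2} (h : IsGSp (fromBlocks A B C D)) :
    ∃ ν : ℚ, ν ≠ 0 ∧ Aᵀ*C = Cᵀ*A ∧ Bᵀ*D = Dᵀ*B ∧ Aᵀ*D - Cᵀ*B = ν • (1:M2) := by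
  obtain ⟨ν, hν, hg⟩ := h
  rw [conj_blocks, smul_J] at hg
  refine ⟨ν, hν, ?_, ?_, ?_⟩
  · have := congrArg toBlocks₁₁ hg
    simp only [toBlocks_fromBlocks₁₁] at this
    linear_combination (norm := module) this
  · have := congrArg toBlocks₂₂ hg
    simp only [toBlocks_fromBlocks₂₂] at this
    linear_combination (norm := module) this
  · have := congrArg toBlocks₁₂ hg
    simp only [toBlocks_fromBlocks₁₂] at this
    exact this

lemma isGSp_mul {g k : Mat4} (hg : IsGSp g) (hk : IsGSp k) : IsGSp (g * k) := by
  obtain ⟨ν, hν, hg⟩ := hg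
  obtain ⟨μ, hμ, hk⟩ := hk
  refine ⟨ν * μ, mul_ne_zero hν hμ, ?_⟩
  calc (g*k)ᵀ * Jmat * (g*k) = kᵀ * (gᵀ * Jmat * g) * k := by
        rw [Matrix.transpose_mul]; noncomm_ring
    _ = (ν*μ) • Jmat := by
        rw [hg, Matrix.mul_smul, Matrix.smul_mul, hk, smul_smul]

lemma isGSp_mMat {A : M2} {c : ℚ} (hA : A.det ≠ 0) (hc : c ≠ 0) : IsGSp (mMat A c) := by
  have hu : IsUnit A.det := isUnit_iff_ne_zero.2 hA
  refine isGSp_of_blocks hc (by simp) (by simp) ?_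
  simp only [Matrix.transpose_zero, Matrix.zero_mul, sub_zero, Matrix.mul_smul]
  rw [← Matrix.transpose_mul, Matrix.nonsing_inv_mul _ hu, Matrix.transpose_one]

lemma isGSp_nMat {B : M2} (hB : Bᵀ = B) : IsGSp (nMat B) := by
  refine isGSp_of_blocks one_ne_zero (by simp) ?_ (by simp)
  simp [hB]

def kap (t N : ℚ) (M : M2) : ℚ := M 0 0 + t/2*(M 0 1 + M 1 0) + N * M 1 1

variable {t N : ℚ}

lemma norm_ne (hd : t^2 - 4*N < 0) {a b : ℚ} (hab : a ≠ 0 ∨ b ≠ 0) :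
    a^2 + t*a*b + N*b^2 ≠ 0 := by
  rcases eq_or_ne b 0 with hb | hb
  · subst hb
    rcases hab with ha | ha
    · have h : a^2 + t*a*0 + N*0^2 = a^2 := by ring
      rw [h]; positivity
    · simp at ha
  · have h1 : a^2 + t*a*b + N*b^2 = (a + t*b/2)^2 + (N - t^2/4)*b^2 := by ring
    have h2 : (N - t^2/4) * b^2 > 0 := by
      apply mul_pos (by linarith) (by positivity)
    nlinarith [sq_nonneg (a + t*b/2)]

lemma det_Iθ (a b : ℚ) : (Iθ t N a b).det = a^2 + t*a*b + N*b^2 := by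
  simp [Iθ, Matrix.det_fin_two_of]; ring

lemma Iθ_one : Iθ t N 1 0 = 1 := by
  ext i j; fin_cases i <;> fin_cases j <;> simp [Iθ]

lemma Xβ_transpose (b₂ b₃ : ℚ) : (Xβ t N b₂ b₃)ᵀ = Xβ t N b₂ b₃ := by
  ext i j; fin_cases i <;> fin_cases j <;> simp [Xβ]

lemma kap_smul (c : ℚ) (M : M2) : kap t N (c • M) = c * kap t N M := by
  simp [kap]; ring

lemma kap_Xβ (b₂ b₃ : ℚ) : kap t N (Xβ t N b₂ b₃) = 0 := by
  simp [kap, Xβ]; ring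

lemma kap_conj (a b : ℚ) (M : M2) :
    kap t N (Iθ t N a b * M * (Iθ t N a b)ᵀ) = (a^2 + t*a*b + N*b^2) * kap t N M := by
  simp only [kap, Matrix.mul_apply, Matrix.transpose_apply, Fin.sum_univ_two]
  simp [Iθ]; ring

lemma kap_adjTθ : kap t N (Tθmat t N).adjugate = 2*N - t^2/2 := by
  simp [kap, Tθmat, Matrix.adjugate_fin_two]; ring

/-- recognition: a symmetric matrix with κ = 0 is an `Xβ`. -/

lemma eq_Xβ_of_kap {M : M2} (hsym : Mᵀ = M) (hk : kap t N M = 0) :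
    M = Xβ t N (M 1 0) (M 1 1) := by
  have h01 : M 0 1 = M 1 0 := by
    have := congrFun (congrFun hsym 1) 0; simpa [Matrix.transpose_apply] using this
  simp only [kap, h01] at hk
  ext i j; fin_cases i <;> fin_cases j <;> simp [Xβ, h01] <;> linarith

lemma nMat_mul_nMat (X Y : M2) : nMat X * nMat Y = nMat (X + Y) := by
  simp [nMat, fromBlocks_multiply, add_comm]

lemma nMat_zero : nMat 0 = 1 := by
  simp [nMat, ← fromBlocks_one]

lemma mMat_mul_nMat (A : M2) (c : ℚ) (S : M2) :
    mMat A c * nMat S = fromBlocks A (A * S) 0 (c • A⁻¹ᵀ) := by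
  simp [mMat, nMat, fromBlocks_multiply]

lemma mMat_inv_form {A : M2} (hA : A.det ≠ 0) :
    mMat A⁻¹ 1 = fromBlocks A⁻¹ 0 0 Aᵀ := by
  rw [mMat, Matrix.nonsing_inv_nonsing_inv _ (isUnit_iff_ne_zero.2 hA), one_smul]

lemma mMat_mul_mMat_inv {A : M2} (hA : A.det ≠ 0) (c : ℚ) (hc : c ≠ 0) :
    mMat A c * mMat A⁻¹ c⁻¹ = 1 := by
  have hu := isUnit_iff_ne_zero.2 hA
  rw [mMat, mMat, Matrix.nonsing_inv_nonsing_inv _ hu, fromBlocks_multiply,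
    ← fromBlocks_one]
  have h1 : A * A⁻¹ = 1 := Matrix.mul_nonsing_inv _ hu
  have h2 : c • A⁻¹ᵀ * (c⁻¹ • Aᵀ) = 1 := by
    rw [Matrix.smul_mul, Matrix.mul_smul, smul_smul, mul_inv_cancel₀ hc,
      ← Matrix.transpose_mul, h1, Matrix.transpose_one, one_smul]
  simp [h1, h2]

/-- inverse of `h = mMat A c * nMat S`. -/

lemma h_mul_hinv {A : M2} (hA : A.det ≠ 0) {c : ℚ} (hc : c ≠ 0) (S : M2) :
    (mMat A c * nMat S) * (nMat (-S) * mMat A⁻¹ c⁻¹) = 1 := by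
  have : mMat A c * nMat S * (nMat (-S) * mMat A⁻¹ c⁻¹)
      = mMat A c * (nMat S * nMat (-S)) * mMat A⁻¹ c⁻¹ := by
    noncomm_ring
  rw [this, nMat_mul_nMat, add_neg_cancel, nMat_zero, Matrix.mul_one,
    mMat_mul_mMat_inv hA c hc]

lemma Umat_mul_Vmat : (!![-t, 1; 1, 0] : M2) * !![0, 1; 1, t] = 1 := by
  ext i j; fin_cases i <;> fin_cases j <;>
    simp [Matrix.mul_apply, Fin.sum_univ_two]

lemma Vmat_mul_Umat : (!![0, 1; 1, t] : M2) * !![-t, 1; 1, 0] = 1 := by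
  ext i j; fin_cases i <;> fin_cases j <;>
    simp [Matrix.mul_apply, Fin.sum_univ_two]

lemma w2_sq : w₂mat t * w₂mat t = 1 := by
  rw [w₂mat, fromBlocks_multiply, ← fromBlocks_one]
  simp [Umat_mul_Vmat, Vmat_mul_Umat, Matrix.one_fin_two]

lemma isGSp_w2 : IsGSp (w₂mat t) := by
  refine isGSp_of_blocks (ν := -1) (by norm_num) (by simp) (by simp) ?_
  have hV : (!![0, 1; 1, t] : M2)ᵀ = !![0, 1; 1, t] := by
    ext i j; fin_cases i <;> fin_cases j <;> simp
  simp [hV, Vmat_mul_Umat]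
  ext i j; fin_cases i <;> fin_cases j <;> simp

def w1inv : Mat4 :=
  Matrix.fromBlocks !![1, 0; 0, 0] !![0, 0; 0, -1] !![0, 0; 0, 1] !![1, 0; 0, 0]

lemma w1_mul_w1inv : w₁mat * w1inv = 1 := by
  rw [w₁mat, w1inv, fromBlocks_multiply, ← fromBlocks_one]
  congr 1 <;> ext i j <;> fin_cases i <;> fin_cases j <;>
    simp [Matrix.mul_apply, Fin.sum_univ_two]

lemma isGSp_w1inv : IsGSp w1inv := by
  refine isGSp_of_blocks (ν := 1) one_ne_zero ?_ ?_ ?_ <;>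
    ext i j <;> fin_cases i <;> fin_cases j <;>
      simp [Matrix.mul_apply, Fin.sum_univ_two, Matrix.transpose_apply,
        Matrix.vecHead, Matrix.vecTail]

lemma siegel_P1_det {p : Mat4} (hp : IsSiegelP p) : (toBlocks₁₁ p).det ≠ 0 := by
  obtain ⟨hg, hc⟩ := hp
  rw [← fromBlocks_toBlocks p, hc] at hg
  obtain ⟨ν, hν, -, -, h3⟩ := isGSp_blocks hg
  simp only [Matrix.transpose_zero, Matrix.zero_mul, sub_zero] at h3
  have := congrArg Matrix.det h3
  rw [Matrix.det_mul, Matrix.det_transpose, Matrix.det_smul, Matrix.det_one] at this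
  intro h0
  rw [h0, zero_mul] at this
  simp only [Fintype.card_fin, mul_one] at this
  exact pow_ne_zero 2 hν this.symm

lemma decomp_blocks {h p : Mat4} (hh : h ∈ iotaBorel t N) (hp : IsSiegelP p)
    (u : Mat4) :
    ∃ (a b lam b₂ b₃ : ℚ) (P1 : M2), (a ≠ 0 ∨ b ≠ 0) ∧ lam ≠ 0 ∧ P1.det ≠ 0 ∧
      toBlocks₂₁ (h * u * p) =
        lam • ((Iθ t N a b)⁻¹ᵀ * (toBlocks₂₁ u * P1)) ∧
      toBlocks₁₁ (h * u * p) =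
        Iθ t N a b * ((toBlocks₁₁ u + Xβ t N b₂ b₃ * toBlocks₂₁ u) * P1) := by
  obtain ⟨a, b, lam, b₂, b₃, hab, hlam, rfl⟩ := hh
  refine ⟨a, b, lam, b₂, b₃, toBlocks₁₁ p, hab, hlam, siegel_P1_det hp, ?_, ?_⟩ <;>
  · rw [mMat_mul_nMat, Matrix.mul_assoc]
    rw [show (fromBlocks (Iθ t N a b) (Iθ t N a b * Xβ t N b₂ b₃) 0
        (lam • (Iθ t N a b)⁻¹ᵀ) : Mat4) * (u * p)
      = fromBlocks (Iθ t N a b) (Iθ t N a b * Xβ t N b₂ b₃) 0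
        (lam • (Iθ t N a b)⁻¹ᵀ) * fromBlocks (toBlocks₁₁ (u*p)) (toBlocks₁₂ (u*p))
          (toBlocks₂₁ (u*p)) (toBlocks₂₂ (u*p)) from by rw [fromBlocks_toBlocks]]
    rw [fromBlocks_multiply]
    simp only [toBlocks_fromBlocks₂₁, toBlocks_fromBlocks₁₁, Matrix.zero_mul,
      zero_add, toB21_mul, toB11_mul, hp.2, Matrix.mul_zero, add_zero]
    first
      | rw [Matrix.smul_mul]
      | noncomm_ring

lemma toB11_nMat (X : M2) : toBlocks₁₁ (nMat X) = 1 := rfl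

lemma toB12_nMat (X : M2) : toBlocks₁₂ (nMat X) = X := rfl

lemma toB21_nMat (X : M2) : toBlocks₂₁ (nMat X) = 0 := rfl

lemma toB22_nMat (X : M2) : toBlocks₂₂ (nMat X) = 1 := rfl

lemma toB21_w2 : toBlocks₂₁ (w₂mat t) = !![0, 1; 1, t] := rfl

lemma toB22_w2 : toBlocks₂₂ (w₂mat t) = 0 := rfl

lemma toB11_w2 : toBlocks₁₁ (w₂mat t) = 0 := rfl

lemma toB21_one : toBlocks₂₁ (1 : Mat4) = 0 := by
  rw [← fromBlocks_one]; rfl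

lemma toB11_one : toBlocks₁₁ (1 : Mat4) = 1 := by
  rw [← fromBlocks_one]; rfl

lemma toB21_w1 : toBlocks₂₁ w₁mat = !![0, 0; 0, -1] := rfl

lemma toB11_w1 : toBlocks₁₁ w₁mat = !![1, 0; 0, 0] := rfl

lemma toB21_ntw2 : toBlocks₂₁ (nMat (Tθmat t N).adjugate * w₂mat t) = !![0, 1; 1, t] := by
  rw [toB21_mul, toB21_nMat, toB22_nMat, toB21_w2]; simp

lemma toB11_ntw2 : toBlocks₁₁ (nMat (Tθmat t N).adjugate * w₂mat t)
    = (Tθmat t N).adjugate * !![0, 1; 1, t] := by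
  rw [toB11_mul, toB11_nMat, toB12_nMat, toB21_w2, toB11_w2]; simp

lemma key_p21 {g : Mat4} {Y : M2} (hY : toBlocks₁₁ g = Y * toBlocks₂₁ g) :
    toBlocks₂₁ (w₂mat t * (nMat (-Y) * g)) = 0 := by
  rw [toB21_mul, toB21_w2, toB22_w2, toB11_mul, toB12_nMat, toB11_nMat,
    toB21_mul, toB21_nMat, toB22_nMat, hY]
  simp [Matrix.neg_mul]

lemma Xβ_zero : Xβ t N 0 0 = 0 := by
  ext i j; fin_cases i <;> fin_cases j <;> simp [Xβ]

lemma mMat_one : mMat 1 1 = 1 := by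
  rw [mMat, inv_one, Matrix.transpose_one, one_smul, fromBlocks_one]

lemma one_mem_iotaBorel : (1 : Mat4) ∈ iotaBorel t N := by
  refine ⟨1, 0, 1, 0, 0, Or.inl one_ne_zero, one_ne_zero, ?_⟩
  rw [Iθ_one, mMat_one, Xβ_zero, nMat_zero, Matrix.one_mul]

lemma surj_rank0 {g : Mat4} (hg : IsGSp g) (hC : toBlocks₂₁ g = 0) :
    ∃ h ∈ iotaBorel t N, ∃ p, IsSiegelP p ∧ g = h * 1 * p :=
  ⟨1, one_mem_iotaBorel, g, ⟨hg, hC⟩, by simp⟩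

lemma adjTθ_symm : ((Tθmat t N).adjugate)ᵀ = (Tθmat t N).adjugate := by
  ext i j; fin_cases i <;> fin_cases j <;> simp [Tθmat, Matrix.adjugate_fin_two]

lemma kap_sub (M M' : M2) : kap t N (M - M') = kap t N M - kap t N M' := by
  simp [kap]; ring

lemma kap_add (M M' : M2) : kap t N (M + M') = kap t N M + kap t N M' := by
  simp [kap]; ring

lemma kap_zero : kap t N (0 : M2) = 0 := by simp [kap]

lemma S_symm {A C : M2} (hdetC : C.det ≠ 0) (h1 : Aᵀ * C = Cᵀ * A) :
    (A * C⁻¹)ᵀ = A * C⁻¹ := by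
  have huC : IsUnit C.det := isUnit_iff_ne_zero.2 hdetC
  have huCT : IsUnit Cᵀ.det := by rwa [Matrix.det_transpose]
  have key : Cᵀ⁻¹ * (Aᵀ * C) * C⁻¹ = Cᵀ⁻¹ * (Cᵀ * A) * C⁻¹ := by rw [h1]
  have e1 : Cᵀ⁻¹ * (Aᵀ * C) * C⁻¹ = Cᵀ⁻¹ * Aᵀ := by
    rw [Matrix.mul_assoc, Matrix.mul_assoc, Matrix.mul_nonsing_inv _ huC,
      Matrix.mul_one]
  have e2 : Cᵀ⁻¹ * (Cᵀ * A) * C⁻¹ = A * C⁻¹ := by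
    rw [← Matrix.mul_assoc Cᵀ⁻¹ Cᵀ A, Matrix.nonsing_inv_mul _ huCT,
      Matrix.one_mul]
  rw [Matrix.transpose_mul, Matrix.transpose_nonsing_inv, ← e1, key, e2]

lemma surj_rank2 (hd : t^2 - 4*N < 0) (hDN : 2*N - t^2/2 ≠ 0) {g : Mat4}
    (hg : IsGSp g) (hdetC : (toBlocks₂₁ g).det ≠ 0) :
    (∃ h ∈ iotaBorel t N, ∃ p, IsSiegelP p ∧ g = h * w₂mat t * p) ∨
    (∃ h ∈ iotaBorel t N, ∃ p, IsSiegelP p ∧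
      g = h * (nMat (Tθmat t N).adjugate * w₂mat t) * p) := by
  set A := toBlocks₁₁ g with hA
  set C := toBlocks₂₁ g with hCdef
  have hg' : IsGSp (fromBlocks A (toBlocks₁₂ g) C (toBlocks₂₂ g)) := by
    rw [fromBlocks_toBlocks]; exact hg
  obtain ⟨ν, hν, h1, -, -⟩ := isGSp_blocks hg'
  have huC : IsUnit C.det := isUnit_iff_ne_zero.2 hdetC
  set S := A * C⁻¹ with hS
  have hSsym : Sᵀ = S := S_symm hdetC h1
  have hSC : S * C = A := by
    rw [hS, Matrix.mul_assoc, Matrix.nonsing_inv_mul _ huC, Matrix.mul_one]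
  by_cases hk : kap t N S = 0
  · -- coset of w₂
    left
    have hXS : Xβ t N (S 1 0) (S 1 1) = S := (eq_Xβ_of_kap hSsym hk).symm
    have hh1 : mMat (Iθ t N 1 0) 1 * nMat (Xβ t N (S 1 0) (S 1 1)) = nMat S := by
      rw [Iθ_one, mMat_one, Matrix.one_mul, hXS]
    refine ⟨_, ⟨1, 0, 1, S 1 0, S 1 1, Or.inl one_ne_zero, one_ne_zero, rfl⟩,
      w₂mat t * (nMat (-S) * g), ⟨?_, ?_⟩, ?_⟩
    · exact isGSp_mul isGSp_w2 (isGSp_mul (isGSp_nMat (by rw [Matrix.transpose_neg, hSsym])) hg)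
    · exact key_p21 (by rw [← hA, ← hCdef, ← hSC])
    · rw [hh1]
      simp only [Matrix.mul_assoc]
      rw [← Matrix.mul_assoc (w₂mat t) (w₂mat t), w2_sq, Matrix.one_mul,
        ← Matrix.mul_assoc (nMat S) (nMat (-S)), nMat_mul_nMat, add_neg_cancel,
        nMat_zero, Matrix.one_mul]
  · -- coset of n(Tθ†) w₂
    right
    set lam := (2*N - t^2/2) / kap t N S with hlam_def
    have hlam : lam ≠ 0 := div_ne_zero hDN hk
    set X := lam • S - (Tθmat t N).adjugate with hXdef
    have hXsym : Xᵀ = X := by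
      rw [hXdef, Matrix.transpose_sub, Matrix.transpose_smul, hSsym, adjTθ_symm]
    have hkX : kap t N X = 0 := by
      rw [hXdef, kap_sub, kap_smul, kap_adjTθ, hlam_def, div_mul_cancel₀ _ hk,
        sub_self]
    have hXeq : Xβ t N (X 1 0) (X 1 1) = X := (eq_Xβ_of_kap hXsym hkX).symm
    have hIone : Iθ t N 1 0 = 1 := Iθ_one
    set Xb := Xβ t N (X 1 0) (X 1 1) with hXb
    set h := mMat (Iθ t N 1 0) lam * nMat Xb with hh
    set hinv := nMat (-Xb) * mMat (Iθ t N 1 0)⁻¹ lam⁻¹ with hhinv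
    have hdetI : (Iθ t N 1 0).det ≠ 0 := by rw [hIone]; simp
    have hhmul : h * hinv = 1 := h_mul_hinv hdetI hlam Xb
    -- blocks of hinv * g
    have hinv_eq : hinv = fromBlocks 1 (lam⁻¹ • (-Xb)) 0 (lam⁻¹ • 1) := by
      rw [hhinv, hIone, inv_one, mMat, inv_one, Matrix.transpose_one, nMat,
        fromBlocks_multiply]
      congr 1 <;> simp
    have h21 : toBlocks₂₁ (hinv * g) = lam⁻¹ • C := by
      rw [toB21_mul, hinv_eq]
      simp only [toBlocks_fromBlocks₂₁, toBlocks_fromBlocks₂₂, Matrix.zero_mul,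
        zero_add, Matrix.smul_mul, Matrix.one_mul]
      rfl
    have h11 : toBlocks₁₁ (hinv * g) = A - lam⁻¹ • (Xb * C) := by
      rw [toB11_mul, hinv_eq]
      simp only [toBlocks_fromBlocks₁₁, toBlocks_fromBlocks₁₂, Matrix.one_mul,
        Matrix.smul_mul, Matrix.neg_mul, smul_neg, ← sub_eq_add_neg]
      rfl
    have hsum : (Tθmat t N).adjugate + Xb = lam • S := by
      rw [hXeq, hXdef]; abel
    have hkey : toBlocks₁₁ (hinv * g) = (Tθmat t N).adjugate * toBlocks₂₁ (hinv * g) := by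
      rw [h11, h21, Matrix.mul_smul, sub_eq_iff_eq_add, ← smul_add,
        ← Matrix.add_mul, hsum, Matrix.smul_mul, inv_smul_smul₀ hlam, hSC]
    refine ⟨h, ⟨1, 0, lam, X 1 0, X 1 1, Or.inl one_ne_zero, hlam, rfl⟩,
      w₂mat t * (nMat (-(Tθmat t N).adjugate) * (hinv * g)), ⟨?_, ?_⟩, ?_⟩
    · refine isGSp_mul isGSp_w2 (isGSp_mul (isGSp_nMat ?_) (isGSp_mul ?_ hg))
      · rw [Matrix.transpose_neg, adjTθ_symm]
      · rw [hhinv]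
        refine isGSp_mul (isGSp_nMat ?_) (isGSp_mMat ?_ (inv_ne_zero hlam))
        · rw [Matrix.transpose_neg, hXb, Xβ_transpose]
        · rw [hIone, inv_one]; simp
    · exact key_p21 hkey
    · rw [show h * (nMat (Tθmat t N).adjugate * w₂mat t) *
          (w₂mat t * (nMat (-(Tθmat t N).adjugate) * (hinv * g)))
        = h * nMat (Tθmat t N).adjugate * (w₂mat t * w₂mat t) *
          nMat (-(Tθmat t N).adjugate) * (hinv * g) from by
          simp only [Matrix.mul_assoc]]
      rw [w2_sq, Matrix.mul_one, Matrix.mul_assoc (h * nMat (Tθmat t N).adjugate),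
        show h * nMat (Tθmat t N).adjugate *
          (nMat (-(Tθmat t N).adjugate) * (hinv * g))
          = h * (nMat (Tθmat t N).adjugate * nMat (-(Tθmat t N).adjugate)) * (hinv * g)
          from by simp only [Matrix.mul_assoc],
        nMat_mul_nMat, add_neg_cancel, nMat_zero, Matrix.mul_one,
        ← Matrix.mul_assoc, hhmul, Matrix.one_mul]

lemma toB21_w1inv : toBlocks₂₁ w1inv = !![0, 0; 0, 1] := rfl

lemma toB22_w1inv : toBlocks₂₂ w1inv = !![1, 0; 0, 0] := rfl

lemma det_inv_ne {I : M2} (hI : I.det ≠ 0) : (I⁻¹).det ≠ 0 := by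
  rw [Matrix.det_nonsing_inv, Ring.inverse_eq_inv']
  exact inv_ne_zero hI

lemma surj_rank1 (hd : t^2 - 4*N < 0) {g : Mat4} (hg : IsGSp g)
    (hCne : toBlocks₂₁ g ≠ 0) (hdetC : (toBlocks₂₁ g).det = 0) :
    ∃ h ∈ iotaBorel t N, ∃ p, IsSiegelP p ∧ g = h * w₁mat * p := by
  set A := toBlocks₁₁ g with hA
  set C := toBlocks₂₁ g with hCdef
  have hg' : IsGSp (fromBlocks A (toBlocks₁₂ g) C (toBlocks₂₂ g)) := by
    rw [fromBlocks_toBlocks]; exact hg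
  obtain ⟨ν, hν, h1, -, -⟩ := isGSp_blocks hg'
  rw [Matrix.det_fin_two] at hdetC
  -- the left kernel covector (a, b) of C
  obtain ⟨a, b, hab, hker⟩ : ∃ a b : ℚ, (a ≠ 0 ∨ b ≠ 0) ∧
      (∀ j, a * C 0 j + b * C 1 j = 0) := by
    by_cases hc : C 1 0 = 0 ∧ C 0 0 = 0
    · refine ⟨C 1 1, -(C 0 1), ?_, ?_⟩
      · by_contra hcon
        push_neg at hcon
        have h01 : C 0 1 = 0 := neg_eq_zero.mp hcon.2
        apply hCne
        ext i j
        fin_cases i <;> fin_cases j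
        · exact hc.2
        · exact h01
        · exact hc.1
        · exact hcon.1
      · intro j; fin_cases j
        · show C 1 1 * C 0 0 + -(C 0 1) * C 1 0 = 0
          linear_combination C 1 1 * hc.2 + (-(C 0 1)) * hc.1
        · show C 1 1 * C 0 1 + -(C 0 1) * C 1 1 = 0
          ring
    · refine ⟨C 1 0, -(C 0 0), ?_, ?_⟩
      · rcases not_and_or.mp hc with h | h
        · exact Or.inl h
        · exact Or.inr fun h' => h (neg_eq_zero.mp h')
      intro j; fin_cases j
      · show C 1 0 * C 0 0 + -(C 0 0) * C 1 0 = 0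
        ring
      · show C 1 0 * C 0 1 + -(C 0 0) * C 1 1 = 0
        linear_combination -hdetC
  have hn : a^2 + t*a*b + N*b^2 ≠ 0 := norm_ne hd hab
  set I := Iθ t N a b with hI
  have hdetI : I.det ≠ 0 := by rw [hI, det_Iθ]; exact hn
  set Ic := (!![a + t*b, b*N; -b, a] : M2) with hIc
  have hIIc : I * Ic = (a^2 + t*a*b + N*b^2) • 1 := by
    ext i j
    fin_cases i <;> fin_cases j <;>
      simp only [Fin.zero_eta, Fin.mk_one, hI, hIc, Iθ, Matrix.of_apply,
        Matrix.mul_apply,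
        Fin.sum_univ_two, Matrix.smul_apply, Matrix.one_apply, Matrix.cons_val',
        Matrix.cons_val_zero, Matrix.cons_val_one, Matrix.head_cons,
        Matrix.head_fin_const, Matrix.empty_val', Matrix.cons_val_fin_one,
        smul_eq_mul] <;> norm_num <;> ring
  have hIinv : I⁻¹ = (a^2 + t*a*b + N*b^2)⁻¹ • Ic := by
    apply Matrix.inv_eq_right_inv
    rw [Matrix.mul_smul, hIIc, smul_smul, inv_mul_cancel₀ hn, one_smul]
  have hC'0 : ∀ j, (Iᵀ * C) 0 j = 0 := by
    intro j
    have e : (Iᵀ * C) 0 j = a * C 0 j + b * C 1 j := by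
      simp only [Matrix.mul_apply, Matrix.transpose_apply, Fin.sum_univ_two, hI, Iθ, Matrix.of_apply, Matrix.cons_val', Matrix.cons_val_zero, Matrix.cons_val_one, Matrix.head_cons, Matrix.head_fin_const, Matrix.empty_val', Matrix.cons_val_fin_one]
    rw [e]; exact hker j
  have hvr : ∀ i j : Fin 2,
      (-b*A 0 i + a*A 1 i) * (-(b*N)*C 0 j + (a+t*b)*C 1 j)
        = (-b*A 0 j + a*A 1 j) * (-(b*N)*C 0 i + (a+t*b)*C 1 i) := by
    intro i j
    have h1' := congrFun (congrFun h1 i) j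
    simp only [Matrix.mul_apply, Fin.sum_univ_two, Matrix.transpose_apply] at h1'
    linear_combination (a^2 + t*a*b + N*b^2) * h1'
      - ((a+t*b)*A 0 i + b*N*A 1 i) * hker j
      + ((a+t*b)*A 0 j + b*N*A 1 j) * hker i
  have er : ∀ j, (Iᵀ * C) 1 j = -(b*N)*C 0 j + (a+t*b)*C 1 j := by
    intro j
    simp only [Matrix.mul_apply, Matrix.transpose_apply, Fin.sum_univ_two, hI, Iθ, Matrix.of_apply, Matrix.cons_val', Matrix.cons_val_zero, Matrix.cons_val_one, Matrix.head_cons, Matrix.head_fin_const, Matrix.empty_val', Matrix.cons_val_fin_one]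
    ring
  have hrne : ¬(( -(b*N)*C 0 0 + (a+t*b)*C 1 0 = 0) ∧
      (-(b*N)*C 0 1 + (a+t*b)*C 1 1 = 0)) := by
    rintro ⟨e0, e1⟩
    apply hCne
    have hC'z : Iᵀ * C = 0 := by
      ext i j
      fin_cases i <;> fin_cases j <;> simp only [Fin.zero_eta, Fin.mk_one,
        Matrix.zero_apply]
      · exact hC'0 0
      · exact hC'0 1
      · rw [er 0]; exact e0
      · rw [er 1]; exact e1
    have h2 : (Iᵀ)⁻¹ * (Iᵀ * C) = C := by
      rw [← Matrix.mul_assoc, Matrix.nonsing_inv_mul _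
        (isUnit_iff_ne_zero.2 (by rw [Matrix.det_transpose]; exact hdetI)),
        Matrix.one_mul]
    rw [hC'z, Matrix.mul_zero] at h2
    exact h2.symm
  obtain ⟨μ, hv⟩ : ∃ μ : ℚ, ∀ j,
      -b*A 0 j + a*A 1 j = μ * (-(b*N)*C 0 j + (a+t*b)*C 1 j) := by
    by_cases h0 : -(b*N)*C 0 0 + (a+t*b)*C 1 0 = 0
    · have h1r : -(b*N)*C 0 1 + (a+t*b)*C 1 1 ≠ 0 := fun h' => hrne ⟨h0, h'⟩
      refine ⟨(-b*A 0 1 + a*A 1 1) / (-(b*N)*C 0 1 + (a+t*b)*C 1 1), ?_⟩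
      intro j; fin_cases j <;> simp only [Fin.zero_eta, Fin.mk_one]
      · rw [h0, mul_zero]
        have h2 := hvr 0 1
        rw [h0, mul_zero] at h2
        rcases mul_eq_zero.mp h2 with h3 | h3
        · exact h3
        · exact absurd h3 h1r
      · exact (div_mul_cancel₀ _ h1r).symm
    · refine ⟨(-b*A 0 0 + a*A 1 0) / (-(b*N)*C 0 0 + (a+t*b)*C 1 0), ?_⟩
      intro j; fin_cases j <;> simp only [Fin.zero_eta, Fin.mk_one]
      · exact (div_mul_cancel₀ _ h0).symm
      · rw [div_mul_eq_mul_div, eq_div_iff h0]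
        linear_combination hvr 1 0
  set μ' := (a^2 + t*a*b + N*b^2)⁻¹ * μ with hμ'
  set Xb := Xβ t N 0 μ' with hXb
  set hinv := nMat (-Xb) * mMat I⁻¹ 1⁻¹ with hhinv
  have hinv_eq : hinv = fromBlocks I⁻¹ (-Xb * Iᵀ) 0 Iᵀ := by
    rw [hhinv, inv_one, mMat_inv_form hdetI, nMat, fromBlocks_multiply]
    congr 1 <;> simp
  have h21' : toBlocks₂₁ (hinv * g) = Iᵀ * C := by
    rw [toB21_mul, hinv_eq]
    simp only [toBlocks_fromBlocks₂₁, toBlocks_fromBlocks₂₂, Matrix.zero_mul,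
      zero_add, ← hCdef]
  have h11' : toBlocks₁₁ (hinv * g) =
      ((a^2 + t*a*b + N*b^2)⁻¹ • (Ic * A)) + (-Xb * Iᵀ) * C := by
    rw [toB11_mul, hinv_eq]
    simp only [toBlocks_fromBlocks₁₁, toBlocks_fromBlocks₁₂, ← hA, ← hCdef,
      hIinv, Matrix.smul_mul]
  have hp21 : toBlocks₂₁ (w1inv * (hinv * g)) = 0 := by
    rw [toB21_mul, toB21_w1inv, toB22_w1inv, h11', h21']
    ext i j
    fin_cases i <;> fin_cases j <;>
      simp only [Fin.zero_eta, Fin.mk_one, Matrix.zero_apply, Matrix.add_apply,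
        Matrix.mul_apply, Fin.sum_univ_two, Matrix.smul_apply, Matrix.neg_apply,
        Matrix.transpose_apply, hXb, Xβ, hIc, hI, Iθ, Matrix.of_apply,
        Matrix.cons_val',
        Matrix.cons_val_zero, Matrix.cons_val_one, Matrix.head_cons,
        Matrix.head_fin_const, Matrix.empty_val', Matrix.cons_val_fin_one,
        smul_eq_mul]
    · linear_combination hker 0
    · linear_combination hker 1
    · linear_combination (a^2 + t*a*b + N*b^2)⁻¹ * hv 0
    · linear_combination (a^2 + t*a*b + N*b^2)⁻¹ * hv 1
  refine ⟨mMat I 1 * nMat Xb, ⟨a, b, 1, 0, μ', hab, one_ne_zero, by rw [hI, hXb]⟩,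
    w1inv * (hinv * g), ⟨?_, hp21⟩, ?_⟩
  · refine isGSp_mul isGSp_w1inv (isGSp_mul ?_ hg)
    rw [hhinv]
    refine isGSp_mul (isGSp_nMat ?_)
      (isGSp_mMat (det_inv_ne hdetI) (by norm_num))
    rw [Matrix.transpose_neg, hXb, Xβ_transpose]
  · rw [show mMat I 1 * nMat Xb * w₁mat * (w1inv * (hinv * g))
        = mMat I 1 * nMat Xb * (w₁mat * w1inv) * (hinv * g) from by
        simp only [Matrix.mul_assoc], w1_mul_w1inv, Matrix.mul_one,
      ← Matrix.mul_assoc, h_mul_hinv hdetI one_ne_zero, Matrix.one_mul]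

lemma lcancel {I' X : M2} (hI' : I'.det ≠ 0) (h : I' * X = 0) : X = 0 := by
  calc X = I'⁻¹ * (I' * X) := by
        rw [← Matrix.mul_assoc, Matrix.nonsing_inv_mul _ (isUnit_iff_ne_zero.2 hI'),
          Matrix.one_mul]
    _ = 0 := by rw [h, Matrix.mul_zero]

lemma rcancel {X P : M2} (hP : P.det ≠ 0) (h : X * P = 0) : X = 0 := by
  calc X = X * P * P⁻¹ := by
        rw [Matrix.mul_assoc, Matrix.mul_nonsing_inv _ (isUnit_iff_ne_zero.2 hP),
          Matrix.mul_one]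
    _ = 0 := by rw [h, Matrix.zero_mul]

lemma cancel_zero {lam : ℚ} (hlam : lam ≠ 0) {I' X P1 : M2} (hI' : I'.det ≠ 0)
    (hP1 : P1.det ≠ 0) (heq : (0 : M2) = lam • (I' * (X * P1))) : X = 0 := by
  have h2 : I' * (X * P1) = 0 := by
    rcases smul_eq_zero.mp heq.symm with h | h
    · exact absurd h hlam
    · exact h
  exact rcancel hP1 (lcancel hI' h2)

lemma det_V : (!![0, 1; 1, t] : M2).det ≠ 0 := by
  rw [Matrix.det_fin_two_of]; norm_num

lemma kappa1 (hd : t^2 - 4*N < 0) (hDN : 2*N - t^2/2 ≠ 0) {a b lam b₂ b₃ : ℚ}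
    {P1 : M2} (hab : a ≠ 0 ∨ b ≠ 0) (hlam : lam ≠ 0)
    (hC : (!![0, 1; 1, t] : M2)
      = lam • ((Iθ t N a b)⁻¹ᵀ * (!![0, 1; 1, t] * P1)))
    (hA : (Tθmat t N).adjugate * !![0, 1; 1, t]
      = Iθ t N a b * ((0 + Xβ t N b₂ b₃ * !![0, 1; 1, t]) * P1)) : False := by
  have hdetI : (Iθ t N a b).det ≠ 0 := by rw [det_Iθ]; exact norm_ne hd hab
  have huIT : IsUnit ((Iθ t N a b)ᵀ).det :=
    isUnit_iff_ne_zero.2 (by rwa [Matrix.det_transpose])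
  have h1 : (Iθ t N a b)ᵀ * !![0, 1; 1, t] = lam • (!![0, 1; 1, t] * P1) := by
    conv_lhs => rw [hC]
    rw [Matrix.mul_smul, Matrix.transpose_nonsing_inv, ← Matrix.mul_assoc,
      Matrix.mul_nonsing_inv _ huIT, Matrix.one_mul]
  have hVP1 : !![0, 1; 1, t] * P1 = lam⁻¹ • ((Iθ t N a b)ᵀ * !![0, 1; 1, t]) := by
    rw [h1, inv_smul_smul₀ hlam]
  have hA2 : (Tθmat t N).adjugate * !![0, 1; 1, t]
      = lam⁻¹ • (Iθ t N a b * (Xβ t N b₂ b₃ * ((Iθ t N a b)ᵀ * !![0, 1; 1, t]))) := by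
    rw [hA, zero_add, Matrix.mul_assoc (Xβ t N b₂ b₃), hVP1, Matrix.mul_smul,
      Matrix.mul_smul]
  have h3 := congrArg (fun M : M2 => M * !![-t, 1; 1, 0]) hA2
  simp only [Matrix.smul_mul] at h3
  rw [Matrix.mul_assoc, Vmat_mul_Umat, Matrix.mul_one] at h3
  simp only [Matrix.mul_assoc] at h3
  rw [Vmat_mul_Umat, Matrix.mul_one] at h3
  have h4 := congrArg (kap t N) h3
  rw [kap_adjTθ, kap_smul, ← Matrix.mul_assoc, kap_conj, kap_Xβ, mul_zero,
    mul_zero] at h4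
  exact hDN h4

lemma kappa2 (hd : t^2 - 4*N < 0) (hDN : 2*N - t^2/2 ≠ 0) {a b lam b₂ b₃ : ℚ}
    {P1 : M2} (hab : a ≠ 0 ∨ b ≠ 0) (hlam : lam ≠ 0) (hP1 : P1.det ≠ 0)
    (hA : (0 : M2) = Iθ t N a b * (((Tθmat t N).adjugate * !![0, 1; 1, t]
        + Xβ t N b₂ b₃ * !![0, 1; 1, t]) * P1)) : False := by
  have hdetI : (Iθ t N a b).det ≠ 0 := by rw [det_Iθ]; exact norm_ne hd hab
  have h2 := rcancel hP1 (lcancel hdetI hA.symm)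
  rw [← Matrix.add_mul] at h2
  have h3 := rcancel (det_V (t := t)) h2
  have h4 := congrArg (kap t N) h3
  rw [kap_add, kap_adjTθ, kap_Xβ, add_zero, kap_zero] at h4
  exact hDN h4

/-- `{1₄, w₁, w₂, n(T_θ†) w₂}` is a complete set of representatives of the double
coset space `ι(B^#(ℚ)) \ GSp₄(ℚ) / P(ℚ)`: every `g ∈ GSp₄(ℚ)` lies in one of the
four double cosets, and the four double cosets are pairwise disjoint. -/
theorem stmt18 (D : ℤ) (hD : D < 0) (t N : ℚ) (ht : t = 0 ∨ t = 1)
    (hN : N = (t ^ 2 - (D : ℚ)) / 4) :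
    let reps : Set Mat4 := {1, w₁mat, w₂mat t, nMat ((Tθmat t N).adjugate) * w₂mat t}
    (∀ g, IsGSp g → ∃ u ∈ reps, ∃ h ∈ iotaBorel t N, ∃ p, IsSiegelP p ∧ g = h * u * p) ∧
    (∀ u ∈ reps, ∀ u' ∈ reps,
      (∃ h ∈ iotaBorel t N, ∃ p, IsSiegelP p ∧ u' = h * u * p) → u = u') := by
  have hDQ : (D : ℚ) < 0 := by exact_mod_cast hD
  have e1 : t^2 - 4*((t^2 - (D:ℚ))/4) = (D:ℚ) := by ring
  have hd : t^2 - 4*N < 0 := by rw [hN, e1]; exact hDQ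
  have e2 : 2*((t^2 - (D:ℚ))/4) - t^2/2 = -(D:ℚ)/2 := by ring
  have hDN : 2*N - t^2/2 ≠ 0 := by rw [hN, e2]; intro hcon; linarith
  intro reps
  have m1 : (1 : Mat4) ∈ reps := Set.mem_insert _ _
  have m2 : w₁mat ∈ reps := Set.mem_insert_of_mem _ (Set.mem_insert _ _)
  have m3 : w₂mat t ∈ reps :=
    Set.mem_insert_of_mem _ (Set.mem_insert_of_mem _ (Set.mem_insert _ _))
  have m4 : nMat ((Tθmat t N).adjugate) * w₂mat t ∈ reps :=
    Set.mem_insert_of_mem _ (Set.mem_insert_of_mem _ (Set.mem_insert_of_mem _ rfl))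
  have hw1ne : (!![0,0;0,-1] : M2) ≠ 0 := by
    intro hcon; have := congrFun (congrFun hcon 1) 1; norm_num at this
  have hVne : (!![0,1;1,t] : M2) ≠ 0 := by
    intro hcon; have := congrFun (congrFun hcon 0) 1; norm_num at this
  have detW1 : (!![0,0;0,-1] : M2).det = 0 := by norm_num [Matrix.det_fin_two_of]
  have detVv : (!![0,1;1,t] : M2).det = -1 := by norm_num [Matrix.det_fin_two_of]
  constructor
  · intro g hg
    by_cases h0 : toBlocks₂₁ g = 0
    · obtain ⟨h, hh, p, hp, he⟩ := surj_rank0 hg h0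
      exact ⟨1, m1, h, hh, p, hp, he⟩
    by_cases h2 : (toBlocks₂₁ g).det = 0
    · obtain ⟨h, hh, p, hp, he⟩ := surj_rank1 hd hg h0 h2
      exact ⟨w₁mat, m2, h, hh, p, hp, he⟩
    · rcases surj_rank2 hd hDN hg h2 with ⟨h, hh, p, hp, he⟩ | ⟨h, hh, p, hp, he⟩
      · exact ⟨w₂mat t, m3, h, hh, p, hp, he⟩
      · exact ⟨_, m4, h, hh, p, hp, he⟩
  · rintro u hu u' hu' ⟨h, hh, p, hp, rfl⟩
    obtain ⟨a, b, lam, b₂, b₃, P1, hab, hlam, hP1, hC, hA⟩ := decomp_blocks hh hp u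
    have hdetI : (Iθ t N a b).det ≠ 0 := by rw [det_Iθ]; exact norm_ne hd hab
    have hdetIT : ((Iθ t N a b)⁻¹ᵀ).det ≠ 0 := by
      rw [Matrix.det_transpose]; exact det_inv_ne hdetI
    unfold reps at hu hu'
    simp only [Set.mem_insert_iff, Set.mem_singleton_iff] at hu hu'
    rcases hu with rfl | rfl | rfl | rfl
    · rcases hu' with h' | h' | h' | h'
      · exact h'.symm
      · exfalso
        rw [h', toB21_w1, toB21_one] at hC
        rw [Matrix.zero_mul, Matrix.mul_zero, smul_zero] at hC
        exact hw1ne hC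
      · exfalso
        rw [h', toB21_w2, toB21_one] at hC
        rw [Matrix.zero_mul, Matrix.mul_zero, smul_zero] at hC
        exact hVne hC
      · exfalso
        rw [h', toB21_ntw2, toB21_one] at hC
        rw [Matrix.zero_mul, Matrix.mul_zero, smul_zero] at hC
        exact hVne hC
    · rcases hu' with h' | h' | h' | h'
      · exfalso
        rw [h', toB21_one, toB21_w1] at hC
        exact hw1ne (cancel_zero hlam hdetIT hP1 hC)
      · exact h'.symm
      · exfalso
        rw [h', toB21_w2, toB21_w1] at hC
        have hdc := congrArg Matrix.det hC
        simp only [Matrix.det_smul, Matrix.det_mul, Fintype.card_fin, detW1,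
          detVv, mul_zero, zero_mul] at hdc
        norm_num at hdc
      · exfalso
        rw [h', toB21_ntw2, toB21_w1] at hC
        have hdc := congrArg Matrix.det hC
        simp only [Matrix.det_smul, Matrix.det_mul, Fintype.card_fin, detW1,
          detVv, mul_zero, zero_mul] at hdc
        norm_num at hdc
    · rcases hu' with h' | h' | h' | h'
      · exfalso
        rw [h', toB21_one, toB21_w2] at hC
        exact hVne (cancel_zero hlam hdetIT hP1 hC)
      · exfalso
        rw [h', toB21_w1, toB21_w2] at hC
        have hdc := congrArg Matrix.det hC
        simp only [Matrix.det_smul, Matrix.det_mul, Fintype.card_fin, detW1,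
          detVv] at hdc
        have hne : lam ^ 2 * (((Iθ t N a b)⁻¹ᵀ).det * (-1 * P1.det)) ≠ 0 :=
          mul_ne_zero (pow_ne_zero _ hlam)
            (mul_ne_zero hdetIT (mul_ne_zero (by norm_num) hP1))
        exact hne hdc.symm
      · exact h'.symm
      · exfalso
        rw [h', toB11_ntw2, toB11_w2, toB21_w2] at hA
        rw [h', toB21_ntw2, toB21_w2] at hC
        exact kappa1 hd hDN hab hlam hC hA
    · rcases hu' with h' | h' | h' | h'
      · exfalso
        rw [h', toB21_one, toB21_ntw2] at hC
        exact hVne (cancel_zero hlam hdetIT hP1 hC)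
      · exfalso
        rw [h', toB21_w1, toB21_ntw2] at hC
        have hdc := congrArg Matrix.det hC
        simp only [Matrix.det_smul, Matrix.det_mul, Fintype.card_fin, detW1,
          detVv] at hdc
        have hne : lam ^ 2 * (((Iθ t N a b)⁻¹ᵀ).det * (-1 * P1.det)) ≠ 0 :=
          mul_ne_zero (pow_ne_zero _ hlam)
            (mul_ne_zero hdetIT (mul_ne_zero (by norm_num) hP1))
        exact hne hdc.symm
      · exfalso
        rw [h', toB11_w2, toB11_ntw2, toB21_ntw2] at hA
        exact kappa2 hd hDN hab hlam hP1 hA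
      · exact h'.symm


end
end
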